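/- arXiv:2505.19655 — 6 statements merged into one kernel-verified Lean document; each statement's English description precedes it below -/
import Mathlib

section
/- Let K : ℝ → ℝ be C¹ and strictly decreasing on (0,∞). Let Ω be the triangle in ℝ² with vertices A, B, C satisfying |BC| > |AC|, and let M be the midpoint of segment AB. Define V_Ω(P) = ∫_Ω K(|P - Q|) dQ. Then for any point P on segment BM (P ≠ M), if P' is the point on segment AM with |PM| = |MP'|, we have V_Ω(P') > V_Ω(P). -/
open MeasureTheory Set Real RealInnerProductSpace
noncomputable section
abbrev E2 := EuclideanSpace ℝ (Fin 2)

lemma ref_formula (v x : E2) :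
    Submodule.reflection (ℝ ∙ v)ᗮ x = x - ((2 * ⟪v, x⟫) / ‖v‖^2) • v := by
  rw [Submodule.reflection_orthogonal_apply, Submodule.reflection_singleton_apply]
  simp only [RCLike.ofReal_real_eq_id, id, two_smul, smul_smul]
  rw [← add_smul]; ring_nf; abel

set_option maxHeartbeats 2000000 in
/-- boundary comparison of `V_Ω` across the midpoint of `AB`
when `|BC| > |AC|`. -/
theorem stmt_0
    (K : ℝ → ℝ) (hK1 : ContDiff ℝ 1 K) (hKanti : StrictAntiOn K (Set.Ioi 0))
    (hKint : IntegrableOn (fun r => K r * r) (Set.Ioc (0:ℝ) 1))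
    (A B C : E2) (hABC : AffineIndependent ℝ ![A, B, C])
    (hside : dist B C > dist A C)
    (M : E2) (hM : M = midpoint ℝ A B)
    (P P' : E2) (hP : P ∈ segment ℝ B M) (hPne : P ≠ M)
    (hP' : P' ∈ segment ℝ A M) (hdist : dist P M = dist M P') :
    (∫ Q in convexHull ℝ {A, B, C}, K (dist P' Q)) >
      ∫ Q in convexHull ℝ {A, B, C}, K (dist P Q) := by
  have hAB : A ≠ B := by
    intro h
    exact (by decide : (0:Fin 3) ≠ 1) (hABC.injective (show ![A,B,C] 0 = ![A,B,C] 1 by simpa using h))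
  set v : E2 := B - A with hvdef
  have hv : v ≠ 0 := sub_ne_zero.mpr (Ne.symm hAB)
  have hv2 : (0:ℝ) < ‖v‖^2 := by
    have := norm_pos_iff.mpr hv; positivity
  set R : E2 ≃ₗᵢ[ℝ] E2 := Submodule.reflection (ℝ ∙ v)ᗮ with hR
  set σ : E2 → E2 := fun x => R (x - M) + M with hσ
  have hRv : R v = -v := Submodule.reflection_orthogonalComplement_singleton_eq_neg v
  have hM2 : M = (2:ℝ)⁻¹ • (A + B) := by rw [hM, midpoint_eq_smul_add, invOf_eq_inv]
  have hMA : A - M = -((2:ℝ)⁻¹ • v) := by rw [hM2, hvdef]; module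
  have hMB : B - M = (2:ℝ)⁻¹ • v := by rw [hM2, hvdef]; module
  have hRhalf : R ((2:ℝ)⁻¹ • v) = -((2:ℝ)⁻¹ • v) := by
    rw [R.map_smul, hRv, smul_neg]
  have hσA : σ A = B := by
    have : σ A = R (A - M) + M := rfl
    rw [this, hMA, map_neg, hRhalf, neg_neg, ← hMB]; abel
  have hσB : σ B = A := by
    have : σ B = R (B - M) + M := rfl
    rw [this, hMB, hRhalf, ← hMA]; abel
  have hσM : σ M = M := by
    have : σ M = R (M - M) + M := rfl
    rw [this]; simp
  have hRR : ∀ y : E2, R (R y) = y := fun y => Submodule.reflection_involutive _ y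
  have hσinv : Function.Involutive σ := by
    intro x
    show R ((R (x - M) + M) - M) + M = x
    rw [add_sub_cancel_right, hRR]; abel
  have hσdist : ∀ x y, dist (σ x) (σ y) = dist x y := by
    intro x y
    show dist (R (x - M) + M) (R (y - M) + M) = _
    simp only [dist_eq_norm, add_sub_add_right_eq_sub, ← map_sub, sub_sub_sub_cancel_right]
    exact R.norm_map _
  have hσcont : Continuous σ := by
    apply Continuous.add _ continuous_const
    exact R.continuous.comp (continuous_id.sub continuous_const)
  have hσmp : MeasurePreserving σ (volume : Measure E2) volume := by
    have h1 : σ = (fun y : E2 => y + M) ∘ (⇑R) ∘ (fun x : E2 => x + (-M)) := by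
      funext x; simp [hσ, sub_eq_add_neg]
    rw [h1]
    exact (measurePreserving_add_right volume M).comp
      (R.measurePreserving.comp (measurePreserving_add_right volume (-M)))
  have hσemb : MeasurableEmbedding σ :=
    (Homeomorph.mk (hσinv.toPerm σ) hσcont hσcont).measurableEmbedding
  have hσimg : ∀ s : Set E2, σ '' s = σ ⁻¹' s := by
    intro s
    ext x
    constructor
    · rintro ⟨y, hy, rfl⟩; simpa [hσinv y] using hy
    · intro hx; exact ⟨σ x, hx, hσinv x⟩

  -- affine basis from the three vertices
  let b : AffineBasis (Fin 3) ℝ E2 :=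
    ⟨![A,B,C], hABC, hABC.affineSpan_eq_top_iff_card_eq_finrank_add_one.mpr (by simp)⟩
  have hb0 : b 0 = A := rfl
  have hb1 : b 1 = B := rfl
  have hb2 : b 2 = C := rfl
  have hrange : Set.range b = ({A, B, C} : Set E2) := by
    show Set.range ![A,B,C] = _
    simp [Matrix.range_cons, Matrix.range_empty]
    ext x; simp; tauto
  have hcoordsum : ∀ x : E2, b.coord 0 x + b.coord 1 x + b.coord 2 x = 1 := by
    intro x
    have := b.sum_coord_apply_eq_one x
    rwa [Fin.sum_univ_three] at this
  have hrepr : ∀ x : E2, x = b.coord 0 x • A + b.coord 1 x • B + b.coord 2 x • C := by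
    intro x
    have := b.linear_combination_coord_eq_self x
    rw [Fin.sum_univ_three, hb0, hb1, hb2] at this
    exact this.symm
  have hhull : convexHull ℝ ({A, B, C} : Set E2) = {x | ∀ i, 0 ≤ b.coord i x} := by
    rw [← hrange, b.convexHull_eq_nonneg_coord]
  have hint : interior (convexHull ℝ ({A, B, C} : Set E2)) = {x | ∀ i, 0 < b.coord i x} := by
    rw [← hrange, b.interior_convexHull]

  -- the reflection in explicit form
  have hσQform : ∀ Q : E2, σ Q = Q - ((2 * ⟪v, Q - M⟫) / ‖v‖^2) • v := by
    intro Q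
    show R (Q - M) + M = _
    rw [hR, ref_formula v (Q - M)]
    abel
  -- inner products with the base direction
  have hinnerA : ⟪v, A - M⟫ = -(‖v‖^2/2) := by
    rw [hMA, inner_neg_right, real_inner_smul_right, real_inner_self_eq_norm_sq]; ring
  have hinnerB : ⟪v, B - M⟫ = ‖v‖^2/2 := by
    rw [hMB, real_inner_smul_right, real_inner_self_eq_norm_sq]; ring
  set t : ℝ := 2 * ⟪v, C - M⟫ / ‖v‖^2 with htdef
  have hinnerC : ⟪v, C - M⟫ = t * (‖v‖^2/2) := by
    rw [htdef]; field_simp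
  have htneg : t < 0 := by
    have h1 : ‖A - C‖^2 < ‖B - C‖^2 := by
      rw [← dist_eq_norm, ← dist_eq_norm]
      exact pow_lt_pow_left₀ hside dist_nonneg two_ne_zero
    have eB : B - C = (2:ℝ)⁻¹ • v - (C - M) := by
      rw [← hMB]; abel
    have eA : A - C = -((2:ℝ)⁻¹ • v) - (C - M) := by
      rw [← hMA]; abel
    rw [eA, eB] at h1
    simp only [norm_sub_sq_real, inner_neg_left, norm_neg, real_inner_smul_left] at h1
    have hw : ⟪v, C - M⟫ < 0 := by linarith
    rw [htdef]
    exact div_neg_of_neg_of_pos (by linarith) hv2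
  -- affine maps on 3-term combinations
  have haff3 : ∀ (f : E2 →ᵃ[ℝ] ℝ) (a c d : ℝ) (x y z : E2), a + c + d = 1 →
      f (a•x + c•y + d•z) = a * f x + c * f y + d * f z := by
    intro f a c d x y z hsum
    have hd := AffineMap.decomp f
    have happ : ∀ p : E2, f p = f.linear p + f 0 := by
      intro p
      conv_lhs => rw [show (f : E2 → ℝ) = ⇑f.linear + Function.const E2 (f 0) from hd]
      rfl
    rw [happ, happ x, happ y, happ z, map_add, map_add, LinearMap.map_smul,
      LinearMap.map_smul, LinearMap.map_smul]
    simp only [smul_eq_mul]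
    linear_combination (-(f 0)) * hsum
  -- coordinates of σ Q
  have hinnerQ : ∀ Q : E2, ⟪v, Q - M⟫
      = (b.coord 1 Q - b.coord 0 Q + b.coord 2 Q * t) * (‖v‖^2/2) := by
    intro Q
    have hQ := hrepr Q
    have hsum := hcoordsum Q
    have e : Q - M = b.coord 0 Q • (A - M) + b.coord 1 Q • (B - M) + b.coord 2 Q • (C - M) := by
      rw [smul_sub, smul_sub, smul_sub]
      nth_rewrite 1 [hQ]
      have : b.coord 0 Q • M + b.coord 1 Q • M + b.coord 2 Q • M = M := by
        rw [← add_smul, ← add_smul, hsum, one_smul]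
      rw [show b.coord 0 Q • A - b.coord 0 Q • M + (b.coord 1 Q • B - b.coord 1 Q • M)
          + (b.coord 2 Q • C - b.coord 2 Q • M)
          = b.coord 0 Q • A + b.coord 1 Q • B + b.coord 2 Q • C
            - (b.coord 0 Q • M + b.coord 1 Q • M + b.coord 2 Q • M) by abel, this]
    rw [e, inner_add_right, inner_add_right, real_inner_smul_right, real_inner_smul_right,
      real_inner_smul_right, hinnerA, hinnerB, hinnerC]
    ring
  have hσQc : ∀ Q : E2, σ Q = (b.coord 1 Q + b.coord 2 Q * t) • A
      + (b.coord 0 Q - b.coord 2 Q * t) • B + b.coord 2 Q • C := by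
    intro Q
    have hc : (2 * ⟪v, Q - M⟫) / ‖v‖^2 = b.coord 1 Q - b.coord 0 Q + b.coord 2 Q * t := by
      rw [hinnerQ Q]; field_simp
    rw [hσQform Q, hc]
    nth_rewrite 1 [hrepr Q]
    rw [hvdef]
    module
  have hσcoord : ∀ (i : Fin 3) (Q : E2), b.coord i (σ Q)
      = (b.coord 1 Q + b.coord 2 Q * t) * b.coord i A
      + (b.coord 0 Q - b.coord 2 Q * t) * b.coord i B + b.coord 2 Q * b.coord i C := by
    intro i Q
    rw [hσQc Q]
    have hsum' : (b.coord 1 Q + b.coord 2 Q * t) + (b.coord 0 Q - b.coord 2 Q * t)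
        + b.coord 2 Q = 1 := by linarith [hcoordsum Q]
    exact haff3 _ _ _ _ _ _ _ hsum'
  have hcA0 : b.coord 0 A = 1 := by rw [← hb0, b.coord_apply, if_pos rfl]
  have hcA1 : b.coord 1 A = 0 := by rw [← hb0, b.coord_apply, if_neg (by decide)]
  have hcA2 : b.coord 2 A = 0 := by rw [← hb0, b.coord_apply, if_neg (by decide)]
  have hcB0 : b.coord 0 B = 0 := by rw [← hb1, b.coord_apply, if_neg (by decide)]
  have hcB1 : b.coord 1 B = 1 := by rw [← hb1, b.coord_apply, if_pos rfl]
  have hcB2 : b.coord 2 B = 0 := by rw [← hb1, b.coord_apply, if_neg (by decide)]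
  have hcC0 : b.coord 0 C = 0 := by rw [← hb2, b.coord_apply, if_neg (by decide)]
  have hcC1 : b.coord 1 C = 0 := by rw [← hb2, b.coord_apply, if_neg (by decide)]
  have hcC2 : b.coord 2 C = 1 := by rw [← hb2, b.coord_apply, if_pos rfl]
  have hσc0 : ∀ Q : E2, b.coord 0 (σ Q) = b.coord 1 Q + b.coord 2 Q * t := by
    intro Q; rw [hσcoord 0 Q, hcA0, hcB0, hcC0]; ring
  have hσc1 : ∀ Q : E2, b.coord 1 (σ Q) = b.coord 0 Q - b.coord 2 Q * t := by
    intro Q; rw [hσcoord 1 Q, hcA1, hcB1, hcC1]; ring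
  have hσc2 : ∀ Q : E2, b.coord 2 (σ Q) = b.coord 2 Q := by
    intro Q; rw [hσcoord 2 Q, hcA2, hcB2, hcC2]; ring
  -- Step A : the B-side of the triangle is mapped into the triangle
  have hstepA : ∀ Q ∈ convexHull ℝ ({A, B, C} : Set E2), 0 ≤ ⟪v, Q - M⟫ →
      σ Q ∈ convexHull ℝ ({A, B, C} : Set E2) := by
    intro Q hQ hQside
    rw [hhull] at hQ ⊢
    have h0 := hQ 0
    have h1 := hQ 1
    have h2 := hQ 2
    have hs : 0 ≤ b.coord 1 Q - b.coord 0 Q + b.coord 2 Q * t := by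
      by_contra hcon
      push_neg at hcon
      have hneg : ⟪v, Q - M⟫ < 0 := by
        rw [hinnerQ Q]
        exact mul_neg_of_neg_of_pos hcon (by linarith)
      linarith
    have h0' : 0 ≤ b.coord 0 (σ Q) := by rw [hσc0 Q]; linarith
    have h1' : 0 ≤ b.coord 1 (σ Q) := by
      rw [hσc1 Q]
      have : b.coord 2 Q * t ≤ 0 := mul_nonpos_of_nonneg_of_nonpos h2 (le_of_lt htneg)
      linarith
    have h2' : 0 ≤ b.coord 2 (σ Q) := by rw [hσc2 Q]; exact h2
    intro i
    fin_cases i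
    exacts [h0', h1', h2']
  -- Step B : σ C is outside the triangle
  have hstepB : σ C ∉ convexHull ℝ ({A, B, C} : Set E2) := by
    rw [hhull]
    intro h
    have := h 0
    rw [hσc0 C, hcC1, hcC2] at this
    nlinarith

  -- P and P'
  obtain ⟨a, c, ha, hc, hac, hPeq⟩ := hP
  have hapos : 0 < a := by
    rcases lt_or_eq_of_le ha with h | h
    · exact h
    · exfalso
      apply hPne
      rw [← hPeq, ← h, zero_smul, zero_add, show c = 1 by linarith, one_smul]
  have hPM : P - M = (a/2) • v := by
    have e1 : P - M = a • (B - M) := by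
      rw [← hPeq]
      have : c • M - M = -(a • M) := by
        rw [show c = 1 - a by linarith]; module
      rw [add_sub_assoc, this, smul_sub]
      abel
    rw [e1, hMB, smul_smul]
    congr 1
  have hσP : σ P - M = -((a/2) • v) := by
    have : σ P - M = R (P - M) := by rw [hσ]; simp
    rw [this, hPM, R.map_smul, hRv, smul_neg]
  obtain ⟨d, e, hdd, he, hde, hP'eq⟩ := hP'
  have hP'M : P' - M = -((d/2) • v) := by
    have e1 : P' - M = d • (A - M) := by
      rw [← hP'eq]
      have : e • M - M = -(d • M) := by
        rw [show e = 1 - d by linarith]; module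
      rw [add_sub_assoc, this, smul_sub]
      abel
    rw [e1, hMA]
    module
  have hda : d = a := by
    have h1 : dist P M = (a/2) * ‖v‖ := by
      rw [dist_eq_norm, hPM, norm_smul, Real.norm_eq_abs, abs_of_nonneg (by linarith : (0:ℝ) ≤ a/2)]
    have h2 : dist M P' = (d/2) * ‖v‖ := by
      rw [dist_eq_norm, show M - P' = -(P' - M) by abel, norm_neg, hP'M, norm_neg, norm_smul,
        Real.norm_eq_abs, abs_of_nonneg (by linarith : (0:ℝ) ≤ d/2)]
    rw [h1, h2] at hdist
    have hvpos : 0 < ‖v‖ := norm_pos_iff.mpr hv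
    have := mul_right_cancel₀ (ne_of_gt hvpos) hdist
    linarith
  have hP'σ : P' = σ P := by
    have : P' - M = σ P - M := by rw [hP'M, hσP, hda]
    have := congrArg (· + M) this
    simpa using this
  -- pointwise distance comparison on the strict A-side
  have hpt : ∀ Q : E2, ⟪v, Q - M⟫ < 0 → dist P' Q < dist P Q := by
    intro Q hQA
    have hw : 0 < ⟪v, M - Q⟫ := by
      rw [show M - Q = -(Q - M) by abel, inner_neg_right]
      linarith
    have e1 : P - Q = (M - Q) + (a/2) • v := by
      rw [← sub_add_sub_cancel P M Q, hPM]; abel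
    have e2 : P' - Q = (M - Q) - (a/2) • v := by
      rw [← sub_add_sub_cancel P' M Q, hP'M, hda]; abel
    have h1 : dist P Q ^ 2 = ‖M - Q‖^2 + 2 * ((a/2) * ⟪v, M - Q⟫) + ((a/2))^2 * ‖v‖^2 := by
      rw [dist_eq_norm, e1, norm_add_sq_real, real_inner_smul_right, norm_smul,
        Real.norm_eq_abs, abs_of_nonneg (by linarith : (0:ℝ) ≤ a/2), real_inner_comm]
      ring
    have h2 : dist P' Q ^ 2 = ‖M - Q‖^2 - 2 * ((a/2) * ⟪v, M - Q⟫) + ((a/2))^2 * ‖v‖^2 := by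
      rw [dist_eq_norm, e2, norm_sub_sq_real, real_inner_smul_right, norm_smul,
        Real.norm_eq_abs, abs_of_nonneg (by linarith : (0:ℝ) ≤ a/2), real_inner_comm]
      ring
    have hlt : dist P' Q ^ 2 < dist P Q ^ 2 := by
      rw [h1, h2]
      have : 0 < (a/2) * ⟪v, M - Q⟫ := mul_pos (by linarith) hw
      linarith
    exact lt_of_pow_lt_pow_left₀ 2 dist_nonneg hlt
  -- strict antitonicity of K including the endpoint 0
  have hKanti' : ∀ x y : ℝ, 0 ≤ x → x < y → K y < K x := by
    intro x y hx hxy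
    rcases lt_or_eq_of_le hx with hpos | h0
    · exact hKanti (mem_Ioi.mpr hpos) (mem_Ioi.mpr (lt_trans hpos hxy)) hxy
    · have hy : 0 < y := by rw [← h0] at hxy; exact hxy
      have h2 : K y < K (y/2) :=
        hKanti (mem_Ioi.mpr (by linarith)) (mem_Ioi.mpr hy) (by linarith)
      have h1 : K (y/2) ≤ K 0 := by
        have hc : Filter.Tendsto K (nhdsWithin 0 (Set.Ioi 0)) (nhds (K 0)) :=
          (hK1.continuous.continuousAt).continuousWithinAt
        apply ge_of_tendsto hc
        filter_upwards [Ioo_mem_nhdsGT_of_mem (by constructor <;> linarith : (0:ℝ) ∈ Set.Ico 0 (y/2))] with z hz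
        exact le_of_lt (hKanti (mem_Ioi.mpr hz.1) (mem_Ioi.mpr (by linarith)) hz.2)
      rw [← h0]
      linarith

  -- sets
  set Ω : Set E2 := convexHull ℝ ({A, B, C} : Set E2) with hΩdef
  have hΩconv : Convex ℝ Ω := convex_convexHull ℝ _
  have hΩcompact : IsCompact Ω :=
    ((Set.finite_singleton C).insert B |>.insert A).isCompact_convexHull ℝ
  have hΩclosed : IsClosed Ω := hΩcompact.isClosed
  have hΩmeas : MeasurableSet Ω := hΩclosed.measurableSet
  set T : Set E2 := σ ⁻¹' Ω with hTdef
  have hTclosed : IsClosed T := hΩclosed.preimage hσcont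
  have hTmeas : MeasurableSet T := hTclosed.measurableSet
  have hTimg : σ '' Ω = T := hσimg Ω
  have hTimg2 : σ '' T = Ω := by
    rw [hσimg T, hTdef, ← Set.preimage_comp]
    have : σ ∘ σ = id := funext hσinv
    rw [this, Set.preimage_id]
  have hTcompact : IsCompact T := by
    rw [← hTimg]; exact hΩcompact.image hσcont
  set S : Set E2 := Ω \ T with hSdef
  have hSmeas : MeasurableSet S := hΩmeas.diff hTmeas
  have hSside : ∀ Q ∈ S, ⟪v, Q - M⟫ < 0 := by
    intro Q hQ
    by_contra hcon
    push_neg at hcon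
    exact hQ.2 (hstepA Q hQ.1 hcon)
  -- S has positive measure
  have hCΩ : C ∈ Ω := subset_convexHull ℝ _ (by simp)
  have hCT : C ∉ T := fun h => hstepB h
  have hSpos : 0 < volume S := by
    have hUopen : IsOpen (interior Ω ∩ Tᶜ) := isOpen_interior.inter hTclosed.isOpen_compl
    have hUne : (interior Ω ∩ Tᶜ).Nonempty := by
      set y := Finset.univ.centroid ℝ b with hy
      have hyint : y ∈ interior Ω := by
        have := b.centroid_mem_interior_convexHull
        rwa [hrange] at this
      have hcont : Continuous (fun a : ℝ => a • y + (1-a) • C) := by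
        apply Continuous.add
        · exact (continuous_id.smul continuous_const)
        · exact ((continuous_const.sub continuous_id).smul continuous_const)
      have h00 : (fun a : ℝ => a • y + (1-a) • C) 0 = C := by norm_num
      have hfc : Filter.Tendsto (fun a : ℝ => a • y + (1-a) • C) (nhds 0) (nhds C) := by
        simpa using hcont.tendsto 0
      have hev : ∀ᶠ a in nhds (0:ℝ), (a • y + (1-a) • C) ∈ Tᶜ :=
        hfc (hTclosed.isOpen_compl.mem_nhds hCT)
      have hev' : ∀ᶠ a in nhdsWithin (0:ℝ) (Set.Ioi 0), (a • y + (1-a) • C) ∈ Tᶜ :=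
        hev.filter_mono nhdsWithin_le_nhds
      have hoo : Set.Ioo (0:ℝ) 1 ∈ nhdsWithin (0:ℝ) (Set.Ioi 0) :=
        Ioo_mem_nhdsGT_of_mem (by constructor <;> norm_num)
      obtain ⟨a, hane, haoo⟩ := (hev'.and (Filter.eventually_of_mem hoo (fun x hx => hx))).exists
      refine ⟨a • y + (1-a) • C, ?_, hane⟩
      exact hΩconv.combo_interior_closure_mem_interior hyint (subset_closure hCΩ)
        haoo.1 (by linarith [haoo.2]) (by ring)
    have hle : interior Ω ∩ Tᶜ ⊆ S := fun x hx => ⟨interior_subset hx.1, hx.2⟩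
    exact lt_of_lt_of_le (hUopen.measure_pos volume hUne) (measure_mono hle)
  -- integrands
  set g : E2 → ℝ := fun Q => K (dist P Q) with hgdef
  set g' : E2 → ℝ := fun Q => K (dist P' Q) with hg'def
  have hgcont : Continuous g := hK1.continuous.comp (continuous_const.dist continuous_id)
  have hg'cont : Continuous g' := hK1.continuous.comp (continuous_const.dist continuous_id)
  have hgΩ : IntegrableOn g Ω volume := hgcont.continuousOn.integrableOn_compact hΩcompact
  have hgT : IntegrableOn g T volume := hgcont.continuousOn.integrableOn_compact hTcompact
  have hg'Ω : IntegrableOn g' Ω volume := hg'cont.continuousOn.integrableOn_compact hΩcompact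
  -- change of variables
  have hdistswap : ∀ x z : E2, dist x (σ z) = dist (σ x) z := by
    intro x z
    conv_rhs => rw [← hσinv z]
    rw [hσdist]
  have hgswap : (fun Q => g (σ Q)) = g' := by
    funext Q
    rw [hgdef, hg'def]
    simp only
    rw [hdistswap, ← hP'σ]
  have key : ∀ s : Set E2, ∫ Q in σ '' s, g Q = ∫ Q in s, g' Q := by
    intro s
    rw [hσmp.setIntegral_image_emb hσemb, hgswap]
  -- main computation
  have e1 : ∫ Q in Ω, g' Q = ∫ Q in T, g Q := by rw [← key Ω, hTimg]
  have himgS : σ '' S = T \ Ω := by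
    rw [hSdef, Set.image_diff (hσinv.injective), hTimg, hTimg2]
  have e2 : ∫ Q in T \ Ω, g Q = ∫ Q in S, g' Q := by rw [← himgS, key S]
  have hdisj1 : Disjoint (T ∩ Ω) (T \ Ω) :=
    Disjoint.mono_left Set.inter_subset_right disjoint_sdiff_self_right
  have hdisj2 : Disjoint (Ω ∩ T) (Ω \ T) :=
    Disjoint.mono_left Set.inter_subset_right disjoint_sdiff_self_right
  have e3 : ∫ Q in T, g Q = (∫ Q in T ∩ Ω, g Q) + ∫ Q in T \ Ω, g Q := by
    rw [← setIntegral_union hdisj1 (hTmeas.diff hΩmeas)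
      (hgT.mono_set Set.inter_subset_left) (hgT.mono_set Set.diff_subset),
      Set.inter_union_diff]
  have e4 : ∫ Q in Ω, g Q = (∫ Q in Ω ∩ T, g Q) + ∫ Q in S, g Q := by
    rw [hSdef, ← setIntegral_union hdisj2 (hΩmeas.diff hTmeas)
      (hgΩ.mono_set Set.inter_subset_left) (hgΩ.mono_set Set.diff_subset),
      Set.inter_union_diff]
  have e5 : ∫ Q in T ∩ Ω, g Q = ∫ Q in Ω ∩ T, g Q := by rw [Set.inter_comm]
  -- strict inequality on S
  have hSg : IntegrableOn g S volume := hgΩ.mono_set Set.diff_subset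
  have hSg' : IntegrableOn g' S volume := hg'Ω.mono_set Set.diff_subset
  have hptS : ∀ Q ∈ S, g Q < g' Q := by
    intro Q hQ
    exact hKanti' (dist P' Q) (dist P Q) dist_nonneg (hpt Q (hSside Q hQ))
  have hstrict : (∫ Q in S, g Q) < ∫ Q in S, g' Q := by
    have hpos : 0 < ∫ Q in S, (g' - g) Q := by
      rw [setIntegral_pos_iff_support_of_nonneg_ae ?hnn (hSg'.sub hSg)]
      case hnn =>
        rw [Filter.EventuallyLE, ae_restrict_iff' hSmeas]
        exact Filter.Eventually.of_forall (fun Q hQ => by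
          simp only [Pi.zero_apply, Pi.sub_apply]; linarith [hptS Q hQ])
      have hsub : S ⊆ Function.support (g' - g) := by
        intro Q hQ
        simp only [Function.mem_support, Pi.sub_apply]
        have := hptS Q hQ
        intro h0
        linarith
      rw [Set.inter_eq_right.mpr hsub]
      exact hSpos
    simp only [Pi.sub_apply] at hpos
    have hsub2 := MeasureTheory.integral_sub hSg' hSg
    rw [hsub2] at hpos
    linarith
  -- conclusion
  show (∫ Q in Ω, g' Q) > ∫ Q in Ω, g Q
  linarith [e1, e2, e3, e4, e5, hstrict]
end
end

section
/- Let Ω = rectangle ABCD ⊂ ℝ² with |AB| > |AD|, and K : ℝ → ℝ be C¹ and strictly decreasing on (0,∞) with ∫₀¹ K(r) r dr < ∞. Define V_Ω(x) = ∫_Ω K(|x−y|) dy. Then (1/|AB|) ∫_{AB} V_Ω ds > (1/|AD|) ∫_{AD} V_Ω ds; that is, the average of V_Ω over the longer side strictly exceeds the average over the shorter side. -/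
open MeasureTheory Set Real

noncomputable section

namespace Stmt3Aux

/-- The potential of the rectangle `[0,a] × [0,b]`, as a function on `ℝ × ℝ`. -/
def W (K : ℝ → ℝ) (a b : ℝ) (z : ℝ × ℝ) : ℝ :=
  ∫ y in Icc (0:ℝ) a ×ˢ Icc (0:ℝ) b,
    K (Real.sqrt ((z.1 - y.1) ^ 2 + (z.2 - y.2) ^ 2))

lemma sq_pos_ne {x : ℝ} (h : x ≠ 0) : 0 < x ^ 2 :=
  lt_of_le_of_ne (sq_nonneg x) (Ne.symm (pow_ne_zero 2 h))

lemma K_le {K : ℝ → ℝ} (hKanti : StrictAntiOn K (Set.Ioi 0)) {r r' : ℝ}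
    (h0 : 0 < r') (hrr : r' ≤ r) : K r ≤ K r' := by
  rcases eq_or_lt_of_le hrr with h | h
  · exact (congrArg K h).ge
  · exact (hKanti h0 (h0.trans h) h).le

/-- Change of variables: swap coordinates. -/
lemma integral_swap_prod (f : ℝ × ℝ → ℝ) (s t : Set ℝ) :
    ∫ y in s ×ˢ t, f y = ∫ y in t ×ˢ s, f (y.2, y.1) := by
  have hmp : MeasurePreserving (Prod.swap : ℝ × ℝ → ℝ × ℝ) volume volume := by
    rw [Measure.volume_eq_prod]
    exact Measure.measurePreserving_swap
  have h := hmp.setIntegral_preimage_emb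
    (MeasurableEquiv.prodComm : ℝ × ℝ ≃ᵐ ℝ × ℝ).measurableEmbedding f (s ×ˢ t)
  rw [← h, Set.preimage_swap_prod]
  rfl

/-- Change of variables: reflect first coordinate, `u ↦ c - u`. -/
lemma integral_reflect_fst (f : ℝ × ℝ → ℝ) (c : ℝ) (s t : Set ℝ) :
    ∫ y in s ×ˢ t, f y
      = ∫ y in ((fun u => c - u) ⁻¹' s) ×ˢ t, f (c - y.1, y.2) := by
  have hmp : MeasurePreserving (Prod.map (fun u : ℝ => c - u) (id : ℝ → ℝ))
      volume volume := by
    rw [Measure.volume_eq_prod]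
    exact (Measure.measurePreserving_sub_left volume c).prod (MeasurePreserving.id _)
  have h := hmp.setIntegral_preimage_emb
    ((MeasurableEquiv.prodCongr (MeasurableEquiv.subLeft c)
      (MeasurableEquiv.refl ℝ)).measurableEmbedding) f (s ×ˢ t)
  rw [← h]
  have heq : Prod.map (fun u : ℝ => c - u) (id : ℝ → ℝ) ⁻¹' (s ×ˢ t)
      = ((fun u => c - u) ⁻¹' s) ×ˢ t := by
    ext ⟨u, v⟩; simp [Prod.map]
  rw [heq]
  rfl

/-- Change of variables: reflect second coordinate, `v ↦ c - v`. -/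
lemma integral_reflect_snd (f : ℝ × ℝ → ℝ) (c : ℝ) (s t : Set ℝ) :
    ∫ y in s ×ˢ t, f y
      = ∫ y in s ×ˢ ((fun u => c - u) ⁻¹' t), f (y.1, c - y.2) := by
  have hmp : MeasurePreserving (Prod.map (id : ℝ → ℝ) (fun u : ℝ => c - u))
      volume volume := by
    rw [Measure.volume_eq_prod]
    exact (MeasurePreserving.id _).prod (Measure.measurePreserving_sub_left volume c)
  have h := hmp.setIntegral_preimage_emb
    ((MeasurableEquiv.prodCongr (MeasurableEquiv.refl ℝ)
      (MeasurableEquiv.subLeft c)).measurableEmbedding) f (s ×ˢ t)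
  rw [← h]
  have heq : Prod.map (id : ℝ → ℝ) (fun u : ℝ => c - u) ⁻¹' (s ×ˢ t)
      = s ×ˢ ((fun u => c - u) ⁻¹' t) := by
    ext ⟨u, v⟩; simp [Prod.map]
  rw [heq]
  rfl

lemma preimage_sub_Icc (c p q : ℝ) :
    (fun u : ℝ => c - u) ⁻¹' Icc p q = Icc (c - q) (c - p) := by
  ext x
  simp only [mem_preimage, mem_Icc]
  constructor <;> intro h <;> exact ⟨by linarith [h.1, h.2], by linarith [h.1, h.2]⟩

lemma null_vert (c : ℝ) : volume ({y : ℝ × ℝ | y.1 = c}) = 0 := by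
  have h : {y : ℝ × ℝ | y.1 = c} = ({c} : Set ℝ) ×ˢ (univ : Set ℝ) := by
    ext ⟨u, v⟩; simp [eq_comm]
  rw [h, Measure.volume_eq_prod, Measure.prod_prod]
  simp

lemma null_horiz (c : ℝ) : volume ({y : ℝ × ℝ | y.2 = c}) = 0 := by
  have h : {y : ℝ × ℝ | y.2 = c} = (univ : Set ℝ) ×ˢ ({c} : Set ℝ) := by
    ext ⟨u, v⟩; simp [eq_comm]
  rw [h, Measure.volume_eq_prod, Measure.prod_prod]
  simp

/-- Split a product-set integral along the first coordinate. -/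
lemma split_fst (f : ℝ × ℝ → ℝ) {p c q : ℝ} (h1 : p ≤ c) (h2 : c ≤ q) (t : Set ℝ)
    (ht : MeasurableSet t) (hf : IntegrableOn f (Icc p q ×ˢ t)) :
    ∫ y in Icc p q ×ˢ t, f y
      = (∫ y in Icc p c ×ˢ t, f y) + ∫ y in Icc c q ×ˢ t, f y := by
  have hun : Icc p c ×ˢ t ∪ Icc c q ×ˢ t = Icc p q ×ˢ t := by
    rw [← Set.union_prod, Set.Icc_union_Icc_eq_Icc h1 h2]
  have hdisj : AEDisjoint volume (Icc p c ×ˢ t) (Icc c q ×ˢ t) := by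
    refine measure_mono_null ?_ (null_vert c)
    rintro ⟨u, v⟩ ⟨h1', h2'⟩
    exact le_antisymm h1'.1.2 h2'.1.1
  rw [← hun, integral_union_ae hdisj
    ((measurableSet_Icc.prod ht).nullMeasurableSet)
    (hf.mono_set (hun ▸ Set.subset_union_left))
    (hf.mono_set (hun ▸ Set.subset_union_right))]

/-- Split a product-set integral along the second coordinate. -/
lemma split_snd (f : ℝ × ℝ → ℝ) {p c q : ℝ} (h1 : p ≤ c) (h2 : c ≤ q) (s : Set ℝ)
    (hs : MeasurableSet s) (hf : IntegrableOn f (s ×ˢ Icc p q)) :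
    ∫ y in s ×ˢ Icc p q, f y
      = (∫ y in s ×ˢ Icc p c, f y) + ∫ y in s ×ˢ Icc c q, f y := by
  have hun : s ×ˢ Icc p c ∪ s ×ˢ Icc c q = s ×ˢ Icc p q := by
    rw [← Set.prod_union, Set.Icc_union_Icc_eq_Icc h1 h2]
  have hdisj : AEDisjoint volume (s ×ˢ Icc p c) (s ×ˢ Icc c q) := by
    refine measure_mono_null ?_ (null_horiz c)
    rintro ⟨u, v⟩ ⟨h1', h2'⟩
    exact le_antisymm h1'.2.2 h2'.2.1
  rw [← hun, integral_union_ae hdisj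
    ((hs.prod measurableSet_Icc).nullMeasurableSet)
    (hf.mono_set (hun ▸ Set.subset_union_left))
    (hf.mono_set (hun ▸ Set.subset_union_right))]

variable {K : ℝ → ℝ}

lemma cont_integrand (hK : Continuous K) (z : ℝ × ℝ) :
    Continuous fun y : ℝ × ℝ => K (Real.sqrt ((z.1 - y.1) ^ 2 + (z.2 - y.2) ^ 2)) := by
  apply hK.comp
  apply Real.continuous_sqrt.comp
  fun_prop

lemma integrableOn_integrand (hK : Continuous K) (z : ℝ × ℝ) {s t : Set ℝ}
    (hs : IsCompact s) (ht : IsCompact t) :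
    IntegrableOn (fun y : ℝ × ℝ => K (Real.sqrt ((z.1 - y.1) ^ 2 + (z.2 - y.2) ^ 2)))
      (s ×ˢ t) volume :=
  (cont_integrand hK z).continuousOn.integrableOn_compact (hs.prod ht)

lemma W_cont (hK : Continuous K) (a b : ℝ) : Continuous (W K a b) := by
  rw [continuous_iff_continuousAt]
  intro z₀
  have hcpt : IsCompact ((Metric.closedBall z₀ 1) ×ˢ (Icc (0:ℝ) a ×ˢ Icc (0:ℝ) b)) :=
    (isCompact_closedBall z₀ 1).prod (isCompact_Icc.prod isCompact_Icc)
  obtain ⟨C, hC⟩ := hcpt.exists_bound_of_continuousOn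
    (f := fun p : (ℝ × ℝ) × (ℝ × ℝ) =>
      K (Real.sqrt ((p.1.1 - p.2.1) ^ 2 + (p.1.2 - p.2.2) ^ 2)))
    (by apply Continuous.continuousOn; apply hK.comp; apply Real.continuous_sqrt.comp; fun_prop)
  apply continuousAt_of_dominated (bound := fun _ => C)
  · exact Filter.Eventually.of_forall fun z =>
      ((cont_integrand hK z).aestronglyMeasurable).restrict
  · filter_upwards [Metric.closedBall_mem_nhds z₀ one_pos] with z hz
    filter_upwards [ae_restrict_mem (measurableSet_Icc.prod measurableSet_Icc)] with y hy
    exact hC (z, y) (Set.mk_mem_prod hz hy)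
  · have : IntegrableOn (fun _ : ℝ × ℝ => C) (Icc (0:ℝ) a ×ˢ Icc (0:ℝ) b) volume :=
      integrableOn_const (isCompact_Icc.prod isCompact_Icc).measure_lt_top.ne
    exact this
  · exact Filter.Eventually.of_forall fun y => by
      apply Continuous.continuousAt
      apply hK.comp
      apply Real.continuous_sqrt.comp
      fun_prop

/-- Symmetry of `W` in the first coordinate about `a / 2`. -/
lemma W_sym1 (K : ℝ → ℝ) (a b p v : ℝ) : W K a b (a - p, v) = W K a b (p, v) := by
  unfold W
  rw [integral_reflect_fst _ a, preimage_sub_Icc]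
  have h1 : a - a = 0 := by ring
  have h2 : a - 0 = a := by ring
  rw [h1, h2]
  congr 1
  funext y
  congr 2
  ring

/-- Symmetry of `W` in the second coordinate about `b / 2`. -/
lemma W_sym2 (K : ℝ → ℝ) (a b p v : ℝ) : W K a b (p, b - v) = W K a b (p, v) := by
  unfold W
  rw [integral_reflect_snd _ b, preimage_sub_Icc]
  have h1 : b - b = 0 := by ring
  have h2 : b - 0 = b := by ring
  rw [h1, h2]
  congr 1
  funext y
  congr 2
  ring

/-- Monotonicity of `W` along the first half of the long side. -/
lemma W_mono (hK : Continuous K) (hKanti : StrictAntiOn K (Set.Ioi 0))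
    {a b s s' : ℝ} (hb : 0 < b) (hs : 0 ≤ s) (hss' : s ≤ s') (hs' : s' ≤ a / 2) :
    W K a b (s, 0) ≤ W K a b (s', 0) := by
  set m2 := s + s' with hm2
  have hm0 : 0 ≤ m2 := by linarith
  have hm2a : m2 ≤ a := by linarith
  -- split both integrals at m2
  have hint : ∀ z : ℝ × ℝ,
      IntegrableOn (fun y : ℝ × ℝ => K (Real.sqrt ((z.1 - y.1) ^ 2 + (z.2 - y.2) ^ 2)))
        (Icc (0:ℝ) a ×ˢ Icc (0:ℝ) b) volume :=
    fun z => integrableOn_integrand hK z isCompact_Icc isCompact_Icc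
  have hsplit : ∀ z : ℝ × ℝ,
      W K a b z = (∫ y in Icc (0:ℝ) m2 ×ˢ Icc (0:ℝ) b,
          K (Real.sqrt ((z.1 - y.1) ^ 2 + (z.2 - y.2) ^ 2)))
        + ∫ y in Icc m2 a ×ˢ Icc (0:ℝ) b,
          K (Real.sqrt ((z.1 - y.1) ^ 2 + (z.2 - y.2) ^ 2)) :=
    fun z => split_fst _ hm0 hm2a _ measurableSet_Icc (hint z)
  rw [hsplit (s, 0), hsplit (s', 0)]
  -- first pieces agree, by reflection about m2 / 2
  have hA : (∫ y in Icc (0:ℝ) m2 ×ˢ Icc (0:ℝ) b,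
        K (Real.sqrt (((s', 0).1 - y.1) ^ 2 + ((s', 0).2 - y.2) ^ 2)))
      = ∫ y in Icc (0:ℝ) m2 ×ˢ Icc (0:ℝ) b,
        K (Real.sqrt (((s, 0).1 - y.1) ^ 2 + ((s, 0).2 - y.2) ^ 2)) := by
    rw [integral_reflect_fst _ m2, preimage_sub_Icc]
    have h1 : m2 - m2 = 0 := by ring
    have h2 : m2 - 0 = m2 := by ring
    rw [h1, h2]
    congr 1
    funext y
    congr 2
    simp only [hm2]
    ring
  rw [hA]
  -- second pieces compare pointwise a.e.
  have hB : (∫ y in Icc m2 a ×ˢ Icc (0:ℝ) b,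
        K (Real.sqrt (((s, 0).1 - y.1) ^ 2 + ((s, 0).2 - y.2) ^ 2)))
      ≤ ∫ y in Icc m2 a ×ˢ Icc (0:ℝ) b,
        K (Real.sqrt (((s', 0).1 - y.1) ^ 2 + ((s', 0).2 - y.2) ^ 2)) := by
    apply setIntegral_mono_ae_restrict
    · exact (integrableOn_integrand hK (s, 0) isCompact_Icc isCompact_Icc)
    · exact (integrableOn_integrand hK (s', 0) isCompact_Icc isCompact_Icc)
    · have hae2 : ∀ᵐ y : ℝ × ℝ ∂(volume.restrict (Icc m2 a ×ˢ Icc (0:ℝ) b)), y.2 ≠ 0 := by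
        apply ae_restrict_of_ae
        rw [ae_iff]
        refine measure_mono_null ?_ (null_horiz 0)
        intro y hy
        simpa using hy
      filter_upwards [hae2, ae_restrict_mem (measurableSet_Icc.prod measurableSet_Icc)]
        with y hy2 hy
      obtain ⟨⟨hu1, hu2⟩, hv1, hv2⟩ := hy
      -- 0 < distance from (s',0), and it is ≤ distance from (s,0)
      have hv2pos : 0 < ((s', 0).2 - y.2) ^ 2 :=
        sq_pos_ne (sub_ne_zero.mpr (Ne.symm hy2))
      have hr'pos : 0 < Real.sqrt (((s', 0).1 - y.1) ^ 2 + ((s', 0).2 - y.2) ^ 2) := by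
        apply Real.sqrt_pos.mpr
        have : (0:ℝ) ≤ ((s', 0).1 - y.1) ^ 2 := sq_nonneg _
        linarith
      apply K_le hKanti hr'pos
      apply Real.sqrt_le_sqrt
      simp only
      nlinarith [hu1, hss', hs]
  linarith

/-- Strict comparison between corresponding points of the two sides. -/
lemma W_strict (hK : Continuous K) (hKanti : StrictAntiOn K (Set.Ioi 0))
    {a b t : ℝ} (hb : 0 < b) (hab : b < a) (ht : 0 < t) (htb : t ≤ b) :
    W K a b (0, t) < W K a b (t, 0) := by
  set F : ℝ × ℝ → ℝ :=
    fun y => K (Real.sqrt ((0 - y.1) ^ 2 + (t - y.2) ^ 2)) with hF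
  have hFcont : Continuous F := cont_integrand hK (0, t)
  -- rewrite W (t,0) as an integral of F over the reflected rectangle
  have hWt : W K a b (t, 0) = ∫ y in Icc (0:ℝ) b ×ˢ Icc (0:ℝ) a, F y := by
    unfold W
    rw [integral_swap_prod]
    congr 1
    funext y
    simp only [hF]
    congr 2
    ring
  have hFint : ∀ (s u : Set ℝ), IsCompact s → IsCompact u → IntegrableOn F (s ×ˢ u) volume :=
    fun s u hs hu => hFcont.continuousOn.integrableOn_compact (hs.prod hu)
  -- split both sides
  have hsplit1 : W K a b (0, t)
      = (∫ y in Icc (0:ℝ) b ×ˢ Icc (0:ℝ) b, F y)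
        + ∫ y in Icc b a ×ˢ Icc (0:ℝ) b, F y := by
    unfold W
    have : (∫ y in Icc (0:ℝ) a ×ˢ Icc (0:ℝ) b,
        K (Real.sqrt (((0:ℝ) - y.1) ^ 2 + (t - y.2) ^ 2)))
        = ∫ y in Icc (0:ℝ) a ×ˢ Icc (0:ℝ) b, F y := rfl
    rw [show ((0, t) : ℝ × ℝ).1 = (0:ℝ) from rfl]
    exact split_fst F hb.le hab.le _ measurableSet_Icc
      (hFint _ _ isCompact_Icc isCompact_Icc)
  have hsplit2 : W K a b (t, 0)
      = (∫ y in Icc (0:ℝ) b ×ˢ Icc (0:ℝ) b, F y)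
        + ∫ y in Icc (0:ℝ) b ×ˢ Icc b a, F y := by
    rw [hWt]
    exact split_snd F hb.le hab.le _ measurableSet_Icc
      (hFint _ _ isCompact_Icc isCompact_Icc)
  -- swap the leftover piece of the short-side integral
  have hswap : (∫ y in Icc b a ×ˢ Icc (0:ℝ) b, F y)
      = ∫ y in Icc (0:ℝ) b ×ˢ Icc b a, F (y.2, y.1) :=
    integral_swap_prod F _ _
  -- the difference is the integral of a nonnegative function, positive on an open box
  set S : Set (ℝ × ℝ) := Icc (0:ℝ) b ×ˢ Icc b a with hS
  set h : ℝ × ℝ → ℝ := fun y => F y - F (y.2, y.1) with hh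
  have hGcont : Continuous (fun y : ℝ × ℝ => F (y.2, y.1)) :=
    hFcont.comp (continuous_snd.prodMk continuous_fst)
  have hGint : IntegrableOn (fun y : ℝ × ℝ => F (y.2, y.1)) S volume :=
    hGcont.continuousOn.integrableOn_compact (isCompact_Icc.prod isCompact_Icc)
  have hinth : IntegrableOn h S volume :=
    (hFint _ _ isCompact_Icc isCompact_Icc).sub hGint
  have hdiff : W K a b (t, 0) - W K a b (0, t) = ∫ y in S, h y := by
    rw [hsplit1, hsplit2, hswap, hh,
      integral_sub (hFint _ _ isCompact_Icc isCompact_Icc) hGint]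
    ring
  -- nonnegativity a.e. on S
  have hnonneg : 0 ≤ᵐ[volume.restrict S] h := by
    have hae1 : ∀ᵐ y : ℝ × ℝ ∂(volume.restrict S), y.1 ≠ 0 := by
      apply ae_restrict_of_ae
      rw [ae_iff]
      refine measure_mono_null ?_ (null_vert 0)
      intro y hy
      simpa using hy
    filter_upwards [hae1, ae_restrict_mem (measurableSet_Icc.prod measurableSet_Icc)]
      with y hy1 hy
    obtain ⟨⟨hu1, hu2⟩, hv1, hv2⟩ := hy
    have hupos : 0 < y.1 := lt_of_le_of_ne hu1 (Ne.symm hy1)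
    have hr1pos : 0 < Real.sqrt ((0 - y.1) ^ 2 + (t - y.2) ^ 2) := by
      apply Real.sqrt_pos.mpr
      have h1 : 0 < (0 - y.1) ^ 2 := sq_pos_ne (sub_ne_zero.mpr (Ne.symm hy1))
      nlinarith [sq_nonneg (t - y.2)]
    show (0:ℝ) ≤ h y
    simp only [hh, hF, sub_nonneg]
    apply K_le hKanti hr1pos
    apply Real.sqrt_le_sqrt
    nlinarith [hu2, hv1, ht]
  -- strict positivity on the open box
  set S0 : Set (ℝ × ℝ) := Ioo (0:ℝ) b ×ˢ Ioo b a with hS0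
  have hS0sub : S0 ⊆ S := Set.prod_mono Set.Ioo_subset_Icc_self Set.Ioo_subset_Icc_self
  have hpos0 : ∀ y ∈ S0, 0 < h y := by
    rintro ⟨u, v⟩ ⟨⟨hu1, hu2⟩, hv1, hv2⟩
    simp only [hh, hF, sub_pos]
    apply hKanti
    · exact Real.sqrt_pos.mpr (by nlinarith)
    · exact Real.sqrt_pos.mpr (by nlinarith)
    · apply Real.sqrt_lt_sqrt (by positivity)
      nlinarith
  have hposint : 0 < ∫ y in S0, h y := by
    rw [setIntegral_pos_iff_support_of_nonneg_ae]
    · rw [show Function.support h ∩ S0 = S0 from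
        Set.inter_eq_self_of_subset_right fun y hy => (hpos0 y hy).ne']
      rw [hS0, Measure.volume_eq_prod, Measure.prod_prod, Real.volume_Ioo, Real.volume_Ioo]
      apply ENNReal.mul_pos <;>
        simp [ENNReal.ofReal_pos] <;> linarith
    · exact ae_restrict_of_ae_restrict_of_subset hS0sub hnonneg
    · exact hinth.mono_set hS0sub
  have hSge : (∫ y in S0, h y) ≤ ∫ y in S, h y :=
    setIntegral_mono_set hinth hnonneg (HasSubset.Subset.eventuallyLE hS0sub)
  linarith [hdiff ▸ (lt_of_lt_of_le hposint hSge)]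

/-- Transfer the potential from `E2` to `ℝ × ℝ`. -/
lemma V_transfer (K : ℝ → ℝ) (a b : ℝ)
    (Ω : Set E2) (hΩ : Ω = {p : E2 | p 0 ∈ Set.Icc 0 a ∧ p 1 ∈ Set.Icc 0 b})
    (x : E2) :
    (∫ y in Ω, K (dist x y)) = W K a b (x 0, x 1) := by
  set p : ℝ := x 0 with hp
  set q : ℝ := x 1 with hq
  set e : E2 ≃ᵐ ℝ × ℝ :=
    (MeasurableEquiv.toLp 2 (Fin 2 → ℝ)).symm.trans MeasurableEquiv.finTwoArrow with he
  have hmp : MeasurePreserving e volume volume :=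
    (volume_preserving_finTwoArrow ℝ).comp
      (EuclideanSpace.volume_preserving_symm_measurableEquiv_toLp (Fin 2))
  have h := hmp.setIntegral_preimage_emb e.measurableEmbedding
    (fun z : ℝ × ℝ => K (Real.sqrt ((p - z.1) ^ 2 + (q - z.2) ^ 2)))
    (Icc (0:ℝ) a ×ˢ Icc (0:ℝ) b)
  have hpre : e ⁻¹' (Icc (0:ℝ) a ×ˢ Icc (0:ℝ) b) = Ω := by
    rw [hΩ]
    ext x
    simp only [mem_preimage, Set.mem_prod, mem_setOf_eq]
    rfl
  have hfun : ∀ z : E2, K (Real.sqrt ((p - (e z).1) ^ 2 + (q - (e z).2) ^ 2))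
      = K (dist x z) := by
    intro z
    congr 1
    have hex : e z = (z 0, z 1) := rfl
    rw [hex, EuclideanSpace.dist_eq, Fin.sum_univ_two]
    simp [Real.dist_eq, sq_abs, hp, hq]
  rw [hpre] at h
  have hΩmeas : MeasurableSet Ω :=
    hpre ▸ e.measurable (measurableSet_Icc.prod measurableSet_Icc)
  calc (∫ y in Ω, K (dist x y))
      = ∫ z in Ω, K (Real.sqrt ((p - (e z).1) ^ 2 + (q - (e z).2) ^ 2)) :=
        setIntegral_congr_fun hΩmeas (fun z _ => (hfun z).symm)
    _ = W K a b (p, q) := h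

end Stmt3Aux

open Stmt3Aux

/-- for the rectangle `[0,a] × [0,b]` with `a > b`, the average of
`V_Ω` over the longer side strictly exceeds the average over the shorter side. -/
theorem stmt_3
    (K : ℝ → ℝ) (hK1 : ContDiff ℝ 1 K) (hKanti : StrictAntiOn K (Set.Ioi 0))
    (hKint : IntegrableOn (fun r => K r * r) (Set.Ioc (0:ℝ) 1))
    (a b : ℝ) (hb : 0 < b) (hab : b < a)
    (Ω : Set E2) (hΩ : Ω = {p : E2 | p 0 ∈ Set.Icc 0 a ∧ p 1 ∈ Set.Icc 0 b})
    (V : E2 → ℝ) (hV : ∀ x, V x = ∫ y in Ω, K (dist x y)) :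
    (1 / a) * ∫ x in (0:ℝ)..a, V (WithLp.toLp 2 ![x, 0]) >
      (1 / b) * ∫ y in (0:ℝ)..b, V (WithLp.toLp 2 ![0, y]) := by
  have hK : Continuous K := hK1.continuous
  have ha : 0 < a := hb.trans hab
  -- replace V by W
  have hVW1 : ∀ x : ℝ, V (WithLp.toLp 2 ![x, 0]) = W K a b (x, 0) := fun x => by
    rw [hV]
    have := V_transfer K a b Ω hΩ (WithLp.toLp 2 ![x, 0])
    simpa using this
  have hVW2 : ∀ y : ℝ, V (WithLp.toLp 2 ![0, y]) = W K a b (0, y) := fun y => by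
    rw [hV]
    have := V_transfer K a b Ω hΩ (WithLp.toLp 2 ![0, y])
    simpa using this
  rw [intervalIntegral.integral_congr (g := fun x => W K a b (x, 0))
        (fun x _ => hVW1 x),
      intervalIntegral.integral_congr (g := fun y => W K a b (0, y))
        (fun y _ => hVW2 y)]
  have hWc : Continuous (W K a b) := W_cont hK a b
  have hc1 : Continuous fun x : ℝ => W K a b (x, 0) :=
    hWc.comp (continuous_id.prodMk continuous_const)
  have hc2 : Continuous fun y : ℝ => W K a b (0, y) :=
    hWc.comp (continuous_const.prodMk continuous_id)
  have hII1 : ∀ u v : ℝ, IntervalIntegrable (fun x => W K a b (x, 0)) volume u v :=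
    fun u v => hc1.intervalIntegrable u v
  have hII2 : ∀ u v : ℝ, IntervalIntegrable (fun y => W K a b (0, y)) volume u v :=
    fun u v => hc2.intervalIntegrable u v
  set c : ℝ := a / b with hc
  have hcpos : 0 < c := div_pos ha hb
  have hc1' : 1 ≤ c := by
    rw [hc, le_div_iff₀ hb]; linarith
  -- fold the long side
  have hlong : (∫ x in (0:ℝ)..a, W K a b (x, 0))
      = 2 * ∫ x in (0:ℝ)..(a / 2), W K a b (x, 0) := by
    have hadj := intervalIntegral.integral_add_adjacent_intervals
      (a := (0:ℝ)) (b := a / 2) (c := a)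
      (hII1 0 (a / 2)) (hII1 (a / 2) a)
    have hrefl : (∫ x in (0:ℝ)..(a / 2), W K a b (a - x, 0))
        = ∫ x in (a / 2)..a, W K a b (x, 0) := by
      have h0 := intervalIntegral.integral_comp_sub_left
        (a := (0:ℝ)) (b := a / 2) (fun x => W K a b (x, 0)) a
      have e1 : a - a / 2 = a / 2 := by ring
      have e2 : a - 0 = a := by ring
      rw [e1, e2] at h0
      exact h0
    have hsym : (∫ x in (0:ℝ)..(a / 2), W K a b (a - x, 0))
        = ∫ x in (0:ℝ)..(a / 2), W K a b (x, 0) :=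
      intervalIntegral.integral_congr fun x _ => W_sym1 K a b x 0
    linarith
  -- fold the short side
  have hshort : (∫ y in (0:ℝ)..b, W K a b (0, y))
      = 2 * ∫ y in (0:ℝ)..(b / 2), W K a b (0, y) := by
    have hadj := intervalIntegral.integral_add_adjacent_intervals
      (a := (0:ℝ)) (b := b / 2) (c := b)
      (hII2 0 (b / 2)) (hII2 (b / 2) b)
    have hrefl : (∫ y in (0:ℝ)..(b / 2), W K a b (0, b - y))
        = ∫ y in (b / 2)..b, W K a b (0, y) := by
      have h0 := intervalIntegral.integral_comp_sub_left
        (a := (0:ℝ)) (b := b / 2) (fun y => W K a b (0, y)) b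
      have e1 : b - b / 2 = b / 2 := by ring
      have e2 : b - 0 = b := by ring
      rw [e1, e2] at h0
      exact h0
    have hsym : (∫ y in (0:ℝ)..(b / 2), W K a b (0, b - y))
        = ∫ y in (0:ℝ)..(b / 2), W K a b (0, y) :=
      intervalIntegral.integral_congr fun y _ => W_sym2 K a b 0 y
    linarith
  -- rescale the long side
  have hscale : (∫ x in (0:ℝ)..(a / 2), W K a b (x, 0))
      = c * ∫ t in (0:ℝ)..(b / 2), W K a b (c * t, 0) := by
    have h0 := intervalIntegral.integral_comp_mul_left
      (a := (0:ℝ)) (b := b / 2) (fun x => W K a b (x, 0)) (ne_of_gt hcpos)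
    have hcb : c * (b / 2) = a / 2 := by
      rw [hc]; field_simp
    rw [hcb, mul_zero] at h0
    rw [h0, smul_eq_mul, ← mul_assoc, mul_inv_cancel₀ (ne_of_gt hcpos), one_mul]
  -- strict pointwise comparison, integrated
  have hkey : (∫ t in (0:ℝ)..(b / 2), W K a b (0, t))
      < ∫ t in (0:ℝ)..(b / 2), W K a b (c * t, 0) := by
    apply intervalIntegral.integral_lt_integral_of_continuousOn_of_le_of_exists_lt
      (by linarith : (0:ℝ) < b / 2)
    · exact hc2.continuousOn
    · exact (hWc.comp ((continuous_const.mul continuous_id).prodMk continuous_const)).continuousOn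
    · intro t ht
      obtain ⟨ht0, htb2⟩ := ht
      have h1 : W K a b (0, t) < W K a b (t, 0) :=
        W_strict hK hKanti hb hab ht0 (by linarith)
      have h2 : W K a b (t, 0) ≤ W K a b (c * t, 0) := by
        apply W_mono hK hKanti hb ht0.le
        · nlinarith
        · rw [hc]
          rw [div_mul_eq_mul_div, div_le_div_iff₀ hb (by norm_num : (0:ℝ) < 2)]
          nlinarith
      linarith
    · refine ⟨b / 2, ⟨by linarith, le_rfl⟩, ?_⟩
      have h1 : W K a b (0, b / 2) < W K a b (b / 2, 0) :=
        W_strict hK hKanti hb hab (by linarith) (by linarith)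
      have h2 : W K a b (b / 2, 0) ≤ W K a b (c * (b / 2), 0) := by
        apply W_mono hK hKanti hb (by linarith)
        · nlinarith
        · rw [hc]; field_simp; exact le_rfl
      linarith
  rw [hlong, hshort, hscale]
  rw [gt_iff_lt, div_mul_eq_mul_div, div_mul_eq_mul_div, div_lt_div_iff₀ hb ha]
  have hcb2 : c * b = a := by
    rw [hc]; field_simp
  have h5 : c * b * (∫ t in (0:ℝ)..(b / 2), W K a b (c * t, 0))
      = a * ∫ t in (0:ℝ)..(b / 2), W K a b (c * t, 0) := by rw [hcb2]
  nlinarith [mul_lt_mul_of_pos_right hkey ha, h5]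
end
end

section
/- Let Ω = rectangle with vertices (0,0), (a,0), (a,b), (0,b) where a > b > 0, and K : ℝ → ℝ be C¹, strictly decreasing on (0,∞). Define V_Ω(x) = ∫_Ω K(|x−y|) dy. Then V_Ω is strictly increasing along the bottom side from the corner (0,0) to the midpoint (a/2, 0). -/
open MeasureTheory Set Real

noncomputable section

/-- on the rectangle `[0,a] × [0,b]` with `a > b`, the potential
`V_Ω` is strictly increasing along the bottom side from the corner to the
midpoint. -/
theorem stmt_4
    (K : ℝ → ℝ) (hK1 : ContDiff ℝ 1 K) (hKanti : StrictAntiOn K (Set.Ioi 0))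
    (hKint : IntegrableOn (fun r => K r * r) (Set.Ioc (0:ℝ) 1))
    (a b : ℝ) (hb : 0 < b) (hab : b < a)
    (Ω : Set E2) (hΩ : Ω = {p : E2 | p 0 ∈ Set.Icc 0 a ∧ p 1 ∈ Set.Icc 0 b})
    (V : E2 → ℝ) (hV : ∀ x, V x = ∫ y in Ω, K (dist x y))
    (s t : ℝ) (hs : 0 ≤ s) (hst : s < t) (ht : t ≤ a / 2) :
    V (WithLp.toLp 2 ![s, 0]) < V (WithLp.toLp 2 ![t, 0]) := by
  have hKc : Continuous K := hK1.continuous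
  set c : ℝ := s + t with hcdef
  have hc0 : 0 < c := by simp only [hcdef]; linarith
  have hca : c < a := by simp only [hcdef]; linarith
  -- the potential kernel in planar coordinates
  set g : ℝ → ℝ × ℝ → ℝ := fun p z => K (Real.sqrt ((z.1 - p) ^ 2 + z.2 ^ 2)) with hgdef
  have hgc : ∀ p, Continuous (g p) := by
    intro p
    apply hKc.comp
    exact Real.continuous_sqrt.comp (by fun_prop)
  -- the measurable equivalence between E2 and ℝ × ℝ
  set Φ : E2 ≃ᵐ (ℝ × ℝ) :=
    (MeasurableEquiv.toLp 2 (Fin 2 → ℝ)).symm.trans MeasurableEquiv.finTwoArrow with hΦdef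
  have hΦmp : MeasurePreserving Φ.symm volume volume :=
    ((EuclideanSpace.volume_preserving_symm_measurableEquiv_toLp (Fin 2)).trans
      (volume_preserving_finTwoArrow ℝ)).symm _
  have hΦ0 : ∀ z : ℝ × ℝ, (Φ.symm z) 0 = z.1 := fun _ => rfl
  have hΦ1 : ∀ z : ℝ × ℝ, (Φ.symm z) 1 = z.2 := fun _ => rfl
  -- key lemma A : V at a bottom point equals a planar integral
  have keyA : ∀ p : ℝ, V (WithLp.toLp 2 ![p, 0]) = ∫ z in Icc 0 a ×ˢ Icc 0 b, g p z := by
    intro p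
    rw [hV, hΩ]
    have hpre : Φ.symm ⁻¹' {q : E2 | q 0 ∈ Icc 0 a ∧ q 1 ∈ Icc 0 b}
        = Icc 0 a ×ˢ Icc 0 b := by
      ext z
      simp only [mem_preimage, mem_setOf_eq, hΦ0, hΦ1, mem_prod, mem_Icc]
    refine Eq.trans (hΦmp.setIntegral_preimage_emb Φ.symm.measurableEmbedding _ _).symm ?_
    rw [hpre]
    refine setIntegral_congr_fun (measurableSet_Icc.prod measurableSet_Icc) ?_
    intro z _
    simp only [hgdef]
    congr 1
    rw [EuclideanSpace.dist_eq, Fin.sum_univ_two]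
    simp only [hΦ0, hΦ1, PiLp.toLp_apply, Matrix.cons_val_zero, Matrix.cons_val_one, Matrix.head_cons,
      Real.dist_eq]
    rw [sq_abs, sq_abs]
    ring
  -- the reflection map
  set f : ℝ × ℝ → ℝ × ℝ := fun z => (c - z.1, z.2) with hfdef
  have hfinv : Function.Involutive f := by
    intro z
    simp only [hfdef]
    norm_num
  have hfm : Measurable f := by fun_prop
  set F : (ℝ × ℝ) ≃ᵐ (ℝ × ℝ) :=
    { toEquiv := hfinv.toPerm f
      measurable_toFun := hfm
      measurable_invFun := hfm } with hFdef
  have hfmp : MeasurePreserving f volume volume := by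
    rw [Measure.volume_eq_prod]
    exact (Measure.measurePreserving_sub_left volume c).prod (MeasurePreserving.id volume)
  have hcomp : ∀ z : ℝ × ℝ, g t (f z) = g s z := by
    intro z
    simp only [hgdef, hfdef]
    congr 2
    rw [hcdef]
    ring
  -- key lemma B : reflection identity for integrals
  have keyB : ∀ T : Set (ℝ × ℝ), ∫ z in f ⁻¹' T, g s z = ∫ z in T, g t z := by
    intro T
    have h := hfmp.setIntegral_preimage_emb F.measurableEmbedding (g t) T
    calc ∫ z in f ⁻¹' T, g s z = ∫ z in f ⁻¹' T, g t (f z) := by simp only [hcomp]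
      _ = ∫ z in T, g t z := h
  -- the sets
  set S : Set (ℝ × ℝ) := Icc 0 a ×ˢ Icc 0 b with hSdef
  set S' : Set (ℝ × ℝ) := Icc (c - a) c ×ˢ Icc 0 b with hS'def
  set A : Set (ℝ × ℝ) := Ioc c a ×ˢ Icc 0 b with hAdef
  set A' : Set (ℝ × ℝ) := Ico (c - a) 0 ×ˢ Icc 0 b with hA'def
  have hfS : f ⁻¹' S = S' := by
    ext z
    simp only [hSdef, hS'def, mem_preimage, hfdef, mem_prod, mem_Icc]
    constructor
    · rintro ⟨⟨h1, h2⟩, h3⟩; exact ⟨⟨by linarith, by linarith⟩, h3⟩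
    · rintro ⟨⟨h1, h2⟩, h3⟩; exact ⟨⟨by linarith, by linarith⟩, h3⟩
  have hfA : f ⁻¹' A = A' := by
    ext z
    simp only [hAdef, hA'def, mem_preimage, hfdef, mem_prod, mem_Ioc, mem_Ico, mem_Icc]
    constructor
    · rintro ⟨⟨h1, h2⟩, h3⟩; exact ⟨⟨by linarith, by linarith⟩, h3⟩
    · rintro ⟨⟨h1, h2⟩, h3⟩; exact ⟨⟨by linarith, by linarith⟩, h3⟩
  have hSdiff : S \ S' = A := by
    ext z
    simp only [hSdef, hS'def, hAdef, mem_diff, mem_prod, mem_Icc, mem_Ioc]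
    constructor
    · rintro ⟨⟨⟨h1, h2⟩, h3⟩, h4⟩
      refine ⟨⟨?_, h2⟩, h3⟩
      by_contra h
      push_neg at h
      exact h4 ⟨⟨by linarith, by linarith⟩, h3⟩
    · rintro ⟨⟨h1, h2⟩, h3⟩
      exact ⟨⟨⟨by linarith, h2⟩, h3⟩, fun hmem => by linarith [hmem.1.2]⟩
  have hS'diff : S' \ S = A' := by
    ext z
    simp only [hSdef, hS'def, hA'def, mem_diff, mem_prod, mem_Icc, mem_Ico]
    constructor
    · rintro ⟨⟨⟨h1, h2⟩, h3⟩, h4⟩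
      refine ⟨⟨h1, ?_⟩, h3⟩
      by_contra h
      push_neg at h
      exact h4 ⟨⟨by linarith, by linarith⟩, h3⟩
    · rintro ⟨⟨h1, h2⟩, h3⟩
      exact ⟨⟨⟨h1, by linarith⟩, h3⟩, fun hmem => by linarith [hmem.1.1]⟩
  -- measurability of the sets
  have hSm : MeasurableSet S := measurableSet_Icc.prod measurableSet_Icc
  have hS'm : MeasurableSet S' := measurableSet_Icc.prod measurableSet_Icc
  have hAm : MeasurableSet A := measurableSet_Ioc.prod measurableSet_Icc
  -- integrability on all relevant sets
  have hbig : ∀ T : Set (ℝ × ℝ), T ⊆ Icc (c - a) a ×ˢ Icc 0 b → ∀ p, IntegrableOn (g p) T := by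
    intro T hT p
    refine IntegrableOn.mono_set ?_ hT
    rw [Icc_prod_Icc]
    exact (hgc p).integrableOn_Icc
  have hSsub : S ⊆ Icc (c - a) a ×ˢ Icc 0 b :=
    prod_mono (Icc_subset_Icc (by linarith) le_rfl) subset_rfl
  have hS'sub : S' ⊆ Icc (c - a) a ×ˢ Icc 0 b :=
    prod_mono (Icc_subset_Icc le_rfl (by linarith)) subset_rfl
  have hAsub : A ⊆ S := hSdiff ▸ diff_subset
  -- split the two integrals over the common part
  have hsplitS : ∫ z in S, g s z = (∫ z in S ∩ S', g s z) + ∫ z in A, g s z := by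
    rw [← hSdiff]
    exact (integral_inter_add_diff hS'm (hbig S hSsub s)).symm
  have hsplitS' : ∫ z in S', g s z = (∫ z in S ∩ S', g s z) + ∫ z in A', g s z := by
    rw [← hS'diff, inter_comm]
    exact (integral_inter_add_diff hSm (hbig S' hS'sub s)).symm
  -- reflection identities
  have hVt : V (WithLp.toLp 2 ![t, 0]) = ∫ z in S', g s z := by
    rw [keyA t, ← hfS, keyB]
  have hVs : V (WithLp.toLp 2 ![s, 0]) = ∫ z in S, g s z := keyA s
  have hA'A : ∫ z in A', g s z = ∫ z in A, g t z := by rw [← hfA, keyB]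
  -- final comparison over A
  have hint_t : IntegrableOn (g t) A := hbig A (hAsub.trans hSsub) t
  have hint_s : IntegrableOn (g s) A := hbig A (hAsub.trans hSsub) s
  have hpt : ∀ z ∈ A, g s z < g t z := by
    rintro ⟨z1, z2⟩ hz
    simp only [hAdef, mem_prod, mem_Ioc, mem_Icc] at hz
    obtain ⟨⟨hz1, hz1'⟩, hz2, hz2'⟩ := hz
    have h1 : 0 < z1 - t := by simp only [hcdef] at hz1; linarith
    have h2 : z1 - t < z1 - s := by linarith
    have hrt : 0 < Real.sqrt ((z1 - t) ^ 2 + z2 ^ 2) := by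
      apply Real.sqrt_pos.2
      nlinarith
    have hlt : Real.sqrt ((z1 - t) ^ 2 + z2 ^ 2) < Real.sqrt ((z1 - s) ^ 2 + z2 ^ 2) := by
      apply Real.sqrt_lt_sqrt (by positivity)
      nlinarith
    exact hKanti (mem_Ioi.2 hrt) (mem_Ioi.2 (hrt.trans hlt)) hlt
  have hposA : 0 < ∫ z in A, (g t z - g s z) := by
    have hnn : 0 ≤ᵐ[volume.restrict A] fun z => g t z - g s z := by
      refine (ae_restrict_iff' hAm).2 (Filter.Eventually.of_forall ?_)
      intro z hz
      have := hpt z hz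
      simp only [Pi.zero_apply]
      linarith
    rw [setIntegral_pos_iff_support_of_nonneg_ae hnn (hint_t.sub hint_s)]
    have hsupp : A ⊆ Function.support (fun z => g t z - g s z) := by
      intro z hz
      have := hpt z hz
      simp only [Function.mem_support]
      intro h0
      linarith
    calc (0 : ENNReal) < volume A := by
          rw [hAdef, Measure.volume_eq_prod, Measure.prod_prod, Real.volume_Ioc,
            Real.volume_Icc]
          have h1 : (0 : ENNReal) < ENNReal.ofReal (a - c) := ENNReal.ofReal_pos.2 (by linarith)
          have h2 : (0 : ENNReal) < ENNReal.ofReal (b - 0) := ENNReal.ofReal_pos.2 (by linarith)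
          exact ENNReal.mul_pos h1.ne' h2.ne'
      _ ≤ volume (Function.support (fun z => g t z - g s z) ∩ A) := by
          apply measure_mono
          intro z hz
          exact ⟨hsupp hz, hz⟩
  have hdiff : ∫ z in A, (g t z - g s z) = (∫ z in A, g t z) - ∫ z in A, g s z :=
    integral_sub hint_t hint_s
  have : V (WithLp.toLp 2 ![t, 0]) - V (WithLp.toLp 2 ![s, 0]) = ∫ z in A, (g t z - g s z) := by
    rw [hVt, hVs, hsplitS, hsplitS', hA'A, hdiff]
    ring
  linarith
end
end

section
/- Let Ω = rectangle ABCD with |AB| > |AD|, and K : ℝ → ℝ C¹ strictly decreasing on (0,∞). Define V_Ω(x) = ∫_Ω K(|x−y|) dy. Then the supremum of V_Ω on side AB strictly exceeds the supremum of V_Ω on side AD: ‖V_Ω‖_{L^∞(AB)} > ‖V_Ω‖_{L^∞(AD)}. -/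
open MeasureTheory Set Real

noncomputable section

namespace Stmt5Aux

/-- axis-aligned box in `E2` -/
def box (s t : Set ℝ) : Set E2 := {p | p 0 ∈ s ∧ p 1 ∈ t}

lemma box_preimage (s t : Set ℝ) :
    box s t = (MeasurableEquiv.toLp 2 (Fin 2 → ℝ)).symm ⁻¹' (Set.univ.pi ![s, t]) := by
  ext p
  simp [box, Set.mem_univ_pi, Fin.forall_fin_two]

lemma measurableSet_box {s t : Set ℝ} (hs : MeasurableSet s) (ht : MeasurableSet t) :
    MeasurableSet (box s t) := by
  rw [box_preimage]
  exact (MeasurableEquiv.toLp 2 (Fin 2 → ℝ)).symm.measurable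
    (MeasurableSet.univ_pi (by rw [Fin.forall_fin_two]; exact ⟨hs, ht⟩))

lemma volume_box {s t : Set ℝ} (hs : MeasurableSet s) (ht : MeasurableSet t) :
    volume (box s t) = volume s * volume t := by
  rw [box_preimage,
    (EuclideanSpace.volume_preserving_symm_measurableEquiv_toLp (Fin 2)).measure_preimage
      (MeasurableSet.univ_pi (by rw [Fin.forall_fin_two]; exact ⟨hs, ht⟩)).nullMeasurableSet,
    volume_pi_pi, Fin.prod_univ_two]
  simp

lemma isCompact_box {s t : Set ℝ} (hs : IsCompact s) (ht : IsCompact t) :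
    IsCompact (box s t) := by
  have h : box s t = (EuclideanSpace.equiv (Fin 2) ℝ).toHomeomorph ⁻¹' (Set.univ.pi ![s, t]) := by
    ext p
    simp [box, Set.mem_univ_pi, Fin.forall_fin_two, EuclideanSpace.equiv]
  rw [h, (EuclideanSpace.equiv (Fin 2) ℝ).toHomeomorph.isCompact_preimage]
  exact isCompact_univ_pi (by rw [Fin.forall_fin_two]; exact ⟨hs, ht⟩)

lemma dist_E2 (x y : E2) :
    dist x y = Real.sqrt ((x 0 - y 0)^2 + (x 1 - y 1)^2) := by
  rw [EuclideanSpace.dist_eq, Fin.sum_univ_two]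
  simp [Real.dist_eq, sq_abs]

/-- the coordinate swap, as a linear isometry -/
def σ2 : E2 ≃ₗᵢ[ℝ] E2 := LinearIsometryEquiv.piLpCongrLeft 2 ℝ ℝ (Equiv.swap (0:Fin 2) 1)

lemma σ2_apply_0 (x : E2) : σ2 x 0 = x 1 := by
  simp [σ2, LinearIsometryEquiv.piLpCongrLeft_apply, Equiv.piCongrLeft'_apply]

lemma σ2_apply_1 (x : E2) : σ2 x 1 = x 0 := by
  simp [σ2, LinearIsometryEquiv.piLpCongrLeft_apply, Equiv.piCongrLeft'_apply]

/-- the reflection `(x₀, x₁) ↦ (x₀, -x₁)` as a linear isometry -/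
def ρ2 : E2 ≃ₗᵢ[ℝ] E2 :=
  LinearIsometryEquiv.piLpCongrRight 2
    (fun i : Fin 2 => if i = 1 then LinearIsometryEquiv.neg ℝ else LinearIsometryEquiv.refl ℝ ℝ)

lemma ρ2_apply_0 (x : E2) : ρ2 x 0 = x 0 := by
  simp [ρ2, LinearIsometryEquiv.piLpCongrRight_apply]

lemma ρ2_apply_1 (x : E2) : ρ2 x 1 = -(x 1) := by
  simp [ρ2, LinearIsometryEquiv.piLpCongrRight_apply]

def cvec (b : ℝ) : E2 := !₂[0, b]

lemma cvec_0 (b : ℝ) : cvec b 0 = 0 := rfl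
lemma cvec_1 (b : ℝ) : cvec b 1 = b := rfl

/-- the reflection across the horizontal midline `x₁ = b/2` -/
def τ2 (b : ℝ) : E2 → E2 := fun x => ρ2 x + cvec b

lemma E2_add_apply (x y : E2) (i : Fin 2) : (x + y) i = x i + y i := rfl

lemma τ2_apply_0 (b : ℝ) (x : E2) : τ2 b x 0 = x 0 := by
  simp [τ2, E2_add_apply, ρ2_apply_0, cvec_0]

lemma τ2_apply_1 (b : ℝ) (x : E2) : τ2 b x 1 = b - x 1 := by
  simp [τ2, E2_add_apply, ρ2_apply_1, cvec_1]; ring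

lemma τ2_measurePreserving (b : ℝ) : MeasurePreserving (τ2 b) (volume) (volume) :=
  (measurePreserving_add_right volume (cvec b)).comp ρ2.measurePreserving

lemma τ2_measurableEmbedding (b : ℝ) : MeasurableEmbedding (τ2 b) :=
  (ρ2.toHomeomorph.trans (Homeomorph.addRight (cvec b))).measurableEmbedding

lemma τ2_dist (b : ℝ) (x y : E2) : dist (τ2 b x) (τ2 b y) = dist x y := by
  simp only [τ2, dist_add_right]
  exact ρ2.dist_map x y

lemma σ2_dist (x y : E2) : dist (σ2 x) (σ2 y) = dist x y := σ2.dist_map x y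

/-- a point of `E2` given by coordinates -/
def Pt (u v : ℝ) : E2 := !₂[u, v]

lemma Pt_0 (u v : ℝ) : Pt u v 0 = u := rfl
lemma Pt_1 (u v : ℝ) : Pt u v 1 = v := rfl

section K
variable {K : ℝ → ℝ}

lemma integrableOn_box (hK : Continuous K) (x : E2) {c d : ℝ} :
    IntegrableOn (fun y => K (dist x y)) (box (Icc 0 c) (Icc 0 d)) :=
  ContinuousOn.integrableOn_compact (isCompact_box isCompact_Icc isCompact_Icc)
    ((hK.comp (continuous_const.dist continuous_id)).continuousOn)

lemma continuous_V (hK : Continuous K) {c d : ℝ} :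
    Continuous (fun x : E2 => ∫ y in box (Icc 0 c) (Icc 0 d), K (dist x y)) := by
  set Ω : Set E2 := box (Icc 0 c) (Icc 0 d) with hΩ
  have hΩm : MeasurableSet Ω := measurableSet_box measurableSet_Icc measurableSet_Icc
  have hΩc : IsCompact Ω := isCompact_box isCompact_Icc isCompact_Icc
  haveI : IsFiniteMeasure (volume.restrict Ω) :=
    ⟨by rw [Measure.restrict_apply_univ]; exact hΩc.measure_lt_top⟩
  obtain ⟨r, hr⟩ := hΩc.isBounded.subset_closedBall 0
  rw [continuous_iff_continuousAt]
  intro x₀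
  set R : ℝ := ‖x₀‖ + 1 + r with hR
  obtain ⟨M, hM⟩ := (isCompact_Icc (a := (0:ℝ)) (b := R)).exists_bound_of_continuousOn
    hK.continuousOn
  apply continuousAt_of_dominated (bound := fun _ => M)
  · exact Filter.Eventually.of_forall fun x =>
      (hK.comp (continuous_const.dist continuous_id)).aestronglyMeasurable
  · filter_upwards [Metric.ball_mem_nhds x₀ one_pos] with x hx
    rw [ae_restrict_iff' hΩm]
    apply Filter.Eventually.of_forall
    intro y hy
    apply hM
    constructor
    · exact dist_nonneg
    · have h1 : dist x y ≤ dist x x₀ + dist x₀ y := dist_triangle _ _ _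
      have h2 : dist x₀ y ≤ dist x₀ 0 + dist 0 y := dist_triangle _ _ _
      have h3 : dist x x₀ < 1 := hx
      have h4 : dist y 0 ≤ r := hr hy
      have h5 : dist x₀ 0 = ‖x₀‖ := dist_zero_right x₀
      rw [dist_comm 0 y] at h2
      linarith
  · exact integrable_const M
  · exact Filter.Eventually.of_forall fun y =>
      (hK.comp (continuous_id.dist continuous_const)).continuousAt


lemma preimage_σ2_box (s t : Set ℝ) : ⇑σ2 ⁻¹' (box s t) = box t s := by
  ext p
  simp only [box, mem_preimage, mem_setOf_eq, σ2_apply_0, σ2_apply_1]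
  exact and_comm

lemma sigma_change (hK : Continuous K) (x : E2) (s t : Set ℝ)
    (hs : MeasurableSet s) (ht : MeasurableSet t) :
    ∫ y in box s t, K (dist x y) = ∫ y in box t s, K (dist (σ2 x) y) := by
  have h := (σ2.measurePreserving).setIntegral_preimage_emb
    (σ2.toHomeomorph.measurableEmbedding) (fun y => K (dist x y)) (box s t)
  rw [preimage_σ2_box] at h
  rw [← h]
  refine setIntegral_congr_fun (measurableSet_box ht hs) fun y _ => ?_
  have : dist x (σ2 y) = dist (σ2 x) y := by
    rw [← σ2_dist (σ2 x) y]
    congr 1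
    refine (WithLp.ext_iff _).2 (funext fun i => ?_)
    fin_cases i <;> simp [σ2_apply_0, σ2_apply_1]
  rw [this]

lemma diff_boxes {a b : ℝ} (hb : 0 < b) (hab : b < a) :
    box (Icc 0 a) (Icc 0 b) \ box (Icc 0 b) (Icc 0 a) = box (Ioc b a) (Icc 0 b) := by
  ext p
  simp only [box, mem_diff, mem_setOf_eq, mem_Icc, mem_Ioc]
  constructor
  · rintro ⟨⟨⟨h1, h2⟩, h3, h4⟩, h5⟩
    push_neg at h5
    refine ⟨⟨?_, h2⟩, h3, h4⟩
    by_contra hc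
    push_neg at hc
    exact absurd (h5 ⟨h1, hc⟩ h3) (by linarith)
  · rintro ⟨⟨h1, h2⟩, h3, h4⟩
    refine ⟨⟨⟨by linarith, h2⟩, h3, h4⟩, ?_⟩
    rintro ⟨⟨_, hc⟩, _⟩
    linarith

lemma diff_boxes' {a b : ℝ} (hb : 0 < b) (hab : b < a) :
    box (Icc 0 b) (Icc 0 a) \ box (Icc 0 a) (Icc 0 b) = box (Icc 0 b) (Ioc b a) := by
  ext p
  simp only [box, mem_diff, mem_setOf_eq, mem_Icc, mem_Ioc]
  constructor
  · rintro ⟨⟨⟨h1, h2⟩, h3, h4⟩, h5⟩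
    push_neg at h5
    refine ⟨⟨h1, h2⟩, ?_, h4⟩
    by_contra hc
    push_neg at hc
    exact absurd (h5 ⟨h1, by linarith⟩ h3) (by linarith)
  · rintro ⟨⟨h1, h2⟩, h3, h4⟩
    refine ⟨⟨⟨h1, by linarith⟩, by linarith, by linarith⟩, ?_⟩
    rintro ⟨_, _, hc⟩
    linarith

/-- The core reflection inequality: the potential at `(s,0)` on the long side strictly
exceeds the potential at the reflected point `(0,s)` on the short side. -/
lemma key_lt (hK : Continuous K) (hKanti : StrictAntiOn K (Set.Ioi 0))
    {a b s : ℝ} (hb : 0 < b) (hab : b < a) (hs0 : 0 < s) (hsb : s ≤ b) :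
    ∫ y in box (Icc 0 a) (Icc 0 b), K (dist (Pt 0 s) y)
      < ∫ y in box (Icc 0 a) (Icc 0 b), K (dist (Pt s 0) y) := by
  set Ω : Set E2 := box (Icc 0 a) (Icc 0 b) with hΩdef
  set Ω' : Set E2 := box (Icc 0 b) (Icc 0 a) with hΩ'def
  set R : Set E2 := box (Ioc b a) (Icc 0 b) with hRdef
  set R' : Set E2 := box (Icc 0 b) (Ioc b a) with hR'def
  set g : E2 → ℝ := fun y => K (dist (Pt s 0) y) with hgdef
  have hΩm : MeasurableSet Ω := measurableSet_box measurableSet_Icc measurableSet_Icc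
  have hΩ'm : MeasurableSet Ω' := measurableSet_box measurableSet_Icc measurableSet_Icc
  have hRm : MeasurableSet R := measurableSet_box measurableSet_Ioc measurableSet_Icc
  have hgint : IntegrableOn g Ω := integrableOn_box hK _
  have hgint' : IntegrableOn g Ω' := integrableOn_box hK _
  -- the potential at (0,s) equals the integral of g over the transposed box Ω'
  have h1 : ∫ y in Ω, K (dist (Pt 0 s) y) = ∫ y in Ω', g y := by
    rw [sigma_change hK _ _ _ measurableSet_Icc measurableSet_Icc]
    refine setIntegral_congr_fun hΩ'm fun y _ => ?_
    congr 2
    refine (WithLp.ext_iff _).2 (funext fun i => ?_)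
    fin_cases i <;> simp [σ2_apply_0, σ2_apply_1, Pt_0, Pt_1]
  -- decompose both integrals over the common square
  have e1 : (∫ y in Ω ∩ Ω', g y) + ∫ y in Ω \ Ω', g y = ∫ y in Ω, g y :=
    integral_inter_add_diff hΩ'm hgint
  have e2 : (∫ y in Ω' ∩ Ω, g y) + ∫ y in Ω' \ Ω, g y = ∫ y in Ω', g y :=
    integral_inter_add_diff hΩm hgint'
  have hdiff : Ω \ Ω' = R := diff_boxes hb hab
  have hdiff' : Ω' \ Ω = R' := diff_boxes' hb hab
  -- the reflected strip integral
  have h4 : ∫ y in R', g y = ∫ w in R, g (σ2 w) := by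
    have h := (σ2.measurePreserving).setIntegral_preimage_emb
      (σ2.toHomeomorph.measurableEmbedding) g R'
    rw [hR'def, preimage_σ2_box] at h
    rw [← h]
  have hgR : IntegrableOn g R := hgint.mono_set (by rw [← hdiff]; exact diff_subset)
  have hgσR : IntegrableOn (fun w => g (σ2 w)) R := by
    have hint : IntegrableOn (fun w => g (σ2 w)) Ω := by
      refine ContinuousOn.integrableOn_compact (isCompact_box isCompact_Icc isCompact_Icc) ?_
      exact ((hK.comp (continuous_const.dist continuous_id)).comp σ2.continuous).continuousOn
    exact hint.mono_set (by rw [← hdiff]; exact diff_subset)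
  -- pointwise strict inequality on the strip R
  have hpt : ∀ w ∈ R, g (σ2 w) < g w := by
    rintro w ⟨hw0, hw1⟩
    rw [mem_Ioc] at hw0; rw [mem_Icc] at hw1
    have hd1 : dist (Pt s 0) w = Real.sqrt ((s - w 0)^2 + (w 1)^2) := by
      rw [dist_E2]; simp [Pt_0, Pt_1]
    have hd2 : dist (Pt s 0) (σ2 w) = Real.sqrt ((s - w 1)^2 + (w 0)^2) := by
      rw [dist_E2]; simp [Pt_0, Pt_1, σ2_apply_0, σ2_apply_1]
    have hpos1 : 0 < dist (Pt s 0) w := by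
      rw [hd1]
      apply Real.sqrt_pos.2
      nlinarith [sq_nonneg (w 1)]
    have hlt : dist (Pt s 0) w < dist (Pt s 0) (σ2 w) := by
      rw [hd1, hd2]
      apply Real.sqrt_lt_sqrt (by positivity)
      nlinarith
    have := hKanti (mem_Ioi.2 hpos1) (mem_Ioi.2 (hpos1.trans hlt)) hlt
    simpa [hgdef] using this
  -- the strip integral difference is positive
  have hposR : 0 < ∫ w in R, (g w - g (σ2 w)) := by
    refine (setIntegral_pos_iff_support_of_nonneg_ae ?_ ?_).2 ?_
    · filter_upwards [ae_restrict_mem hRm] with w hw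
      exact sub_nonneg.2 (hpt w hw).le
    · exact hgR.sub hgσR
    · refine lt_of_lt_of_le (b := volume R) ?_ (measure_mono ?_)
      · show 0 < volume R
        rw [hRdef, volume_box measurableSet_Ioc measurableSet_Icc, Real.volume_Ioc,
          Real.volume_Icc]
        exact ENNReal.mul_pos (by simp [ENNReal.ofReal_pos]; linarith)
          (by simp [ENNReal.ofReal_pos]; linarith)
      · intro w hw
        refine ⟨?_, hw⟩
        rw [Function.mem_support]
        have h2 := hpt w hw
        intro h0
        have : (0:ℝ) < 0 := by rw [← h0]; linarith
        exact absurd this (lt_irrefl 0)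
  -- combine
  have hsplit : ∫ y in Ω, K (dist (Pt 0 s) y) = (∫ y in Ω' ∩ Ω, g y) + ∫ w in R, g (σ2 w) := by
    rw [h1, ← e2, hdiff', h4]
  have hsplit' : (∫ y in Ω, g y) = (∫ y in Ω' ∩ Ω, g y) + ∫ w in R, g w := by
    rw [← e1, hdiff, inter_comm]
  have hintdiff : (∫ w in R, g w) - ∫ w in R, g (σ2 w) = ∫ w in R, (g w - g (σ2 w)) :=
    (integral_sub hgR hgσR).symm
  show ∫ y in Ω, K (dist (Pt 0 s) y) < ∫ y in Ω, g y
  rw [hsplit, hsplit']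
  have : (∫ w in R, g (σ2 w)) < ∫ w in R, g w := by linarith [hintdiff ▸ hposR]
  linarith

/-- invariance of the potential under the reflection across the horizontal midline -/
lemma sym_V (hK : Continuous K) {a b : ℝ} (x : E2) :
    ∫ y in box (Icc 0 a) (Icc 0 b), K (dist (τ2 b x) y)
      = ∫ y in box (Icc 0 a) (Icc 0 b), K (dist x y) := by
  have hpre : τ2 b ⁻¹' (box (Icc 0 a) (Icc 0 b)) = box (Icc 0 a) (Icc 0 b) := by
    ext p
    simp only [box, mem_preimage, mem_setOf_eq, τ2_apply_0, τ2_apply_1, mem_Icc]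
    constructor
    · rintro ⟨h1, h2, h3⟩
      exact ⟨h1, by linarith, by linarith⟩
    · rintro ⟨h1, h2, h3⟩
      exact ⟨h1, by linarith, by linarith⟩
  have h := (τ2_measurePreserving b).setIntegral_preimage_emb (τ2_measurableEmbedding b)
    (fun y => K (dist (τ2 b x) y)) (box (Icc 0 a) (Icc 0 b))
  rw [hpre] at h
  rw [← h]
  refine setIntegral_congr_fun (measurableSet_box measurableSet_Icc measurableSet_Icc)
    fun z _ => ?_
  rw [τ2_dist]

end K

lemma E2_smul_apply (c : ℝ) (x : E2) (i : Fin 2) : (c • x) i = c * x i := rfl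

lemma segment_vert {b : ℝ} (hb : 0 < b) :
    segment ℝ (Pt 0 0) (Pt 0 b) = (fun t => Pt 0 t) '' Icc 0 b := by
  rw [segment_eq_image]
  have hfun : ∀ θ : ℝ, (1 - θ) • (Pt 0 0) + θ • (Pt 0 b) = Pt 0 (θ * b) := by
    intro θ
    refine (WithLp.ext_iff _).2 (funext fun i => ?_)
    fin_cases i <;> simp [E2_add_apply, E2_smul_apply, Pt_0, Pt_1]
  ext q
  constructor
  · rintro ⟨θ, hθ, rfl⟩
    exact ⟨θ * b, ⟨mul_nonneg hθ.1 hb.le, by nlinarith [hθ.2]⟩, (hfun θ).symm⟩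
  · rintro ⟨t, ht, rfl⟩
    refine ⟨t / b, ⟨div_nonneg ht.1 hb.le, (div_le_one hb).2 ht.2⟩, ?_⟩
    show (1 - t/b) • (Pt 0 0) + (t/b) • (Pt 0 b) = Pt 0 t
    rw [hfun, div_mul_cancel₀ _ hb.ne']

lemma segment_horiz {a : ℝ} (ha : 0 < a) :
    segment ℝ (Pt 0 0) (Pt a 0) = (fun t => Pt t 0) '' Icc 0 a := by
  rw [segment_eq_image]
  have hfun : ∀ θ : ℝ, (1 - θ) • (Pt 0 0) + θ • (Pt a 0) = Pt (θ * a) 0 := by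
    intro θ
    refine (WithLp.ext_iff _).2 (funext fun i => ?_)
    fin_cases i <;> simp [E2_add_apply, E2_smul_apply, Pt_0, Pt_1]
  ext q
  constructor
  · rintro ⟨θ, hθ, rfl⟩
    exact ⟨θ * a, ⟨mul_nonneg hθ.1 ha.le, by nlinarith [hθ.2]⟩, (hfun θ).symm⟩
  · rintro ⟨t, ht, rfl⟩
    refine ⟨t / a, ⟨div_nonneg ht.1 ha.le, (div_le_one ha).2 ht.2⟩, ?_⟩
    show (1 - t/a) • (Pt 0 0) + (t/a) • (Pt a 0) = Pt t 0
    rw [hfun, div_mul_cancel₀ _ ha.ne']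

lemma continuous_pt_vert : Continuous (fun t : ℝ => Pt 0 t) := by
  have h : (fun t : ℝ => Pt 0 t) = fun t : ℝ => t • (Pt 0 1) := by
    refine funext fun t => (WithLp.ext_iff _).2 (funext fun i => ?_)
    fin_cases i <;> simp [E2_smul_apply, Pt_0, Pt_1]
  rw [h]
  exact continuous_id.smul continuous_const

lemma continuous_pt_horiz : Continuous (fun t : ℝ => Pt t 0) := by
  have h : (fun t : ℝ => Pt t 0) = fun t : ℝ => t • (Pt 1 0) := by
    refine funext fun t => (WithLp.ext_iff _).2 (funext fun i => ?_)
    fin_cases i <;> simp [E2_smul_apply, Pt_0, Pt_1]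
  rw [h]
  exact continuous_id.smul continuous_const

end Stmt5Aux

open Stmt5Aux

/-- for a rectangle `ABCD` with `|AB| > |AD|`, the sup of `V_Ω` on
the longer side `AB` strictly exceeds the sup on the shorter side `AD`. -/
theorem stmt_5
    (K : ℝ → ℝ) (hK1 : ContDiff ℝ 1 K) (hKanti : StrictAntiOn K (Set.Ioi 0))
    (hKint : IntegrableOn (fun r => K r * r) (Set.Ioc (0:ℝ) 1))
    (a b : ℝ) (hb : 0 < b) (hab : b < a)
    (A B C D : E2) (hA : A = !₂[0, 0]) (hB : B = !₂[a, 0]) (hC : C = !₂[a, b])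
    (hD : D = !₂[0, b])
    (Ω : Set E2) (hΩ : Ω = {p : E2 | p 0 ∈ Set.Icc 0 a ∧ p 1 ∈ Set.Icc 0 b})
    (V : E2 → ℝ) (hV : ∀ x, V x = ∫ y in Ω, K (dist x y)) :
    sSup (V '' segment ℝ A B) > sSup (V '' segment ℝ A D) := by
  subst hA hB hC hD
  have hKc : Continuous K := hK1.continuous
  have hΩbox : Ω = box (Icc 0 a) (Icc 0 b) := by rw [hΩ]; rfl
  have hVfun : V = fun x => ∫ y in box (Icc 0 a) (Icc 0 b), K (dist x y) :=
    funext fun x => by rw [hV x, hΩbox]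
  have hcontV : Continuous V := by rw [hVfun]; exact continuous_V hKc
  have ha : 0 < a := hb.trans hab
  show sSup (V '' segment ℝ (Pt 0 0) (Pt a 0)) > sSup (V '' segment ℝ (Pt 0 0) (Pt 0 b))
  rw [segment_horiz ha, segment_vert hb, ← Set.image_comp, ← Set.image_comp]
  set g1 : ℝ → ℝ := V ∘ (fun t => Pt t 0) with hg1def
  set g2 : ℝ → ℝ := V ∘ (fun t => Pt 0 t) with hg2def
  have hg1 : Continuous g1 := hcontV.comp continuous_pt_horiz
  have hg2 : Continuous g2 := hcontV.comp continuous_pt_vert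
  obtain ⟨t0, ht0, hsup⟩ := isCompact_Icc.exists_sSup_image_eq
    (⟨0, le_refl 0, hb.le⟩ : (Icc (0:ℝ) b).Nonempty) hg2.continuousOn
  rw [mem_Icc] at ht0
  set s0 := max t0 (b - t0) with hs0def
  have hs0b : s0 ≤ b := max_le ht0.2 (by linarith [ht0.1])
  have hs00 : 0 < s0 := by
    have h1 := le_max_left t0 (b - t0)
    have h2 := le_max_right t0 (b - t0)
    linarith
  have hg2eq : g2 t0 = g2 s0 := by
    rcases max_cases t0 (b - t0) with ⟨h, -⟩ | ⟨h, -⟩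
    · rw [hs0def, h]
    · rw [hs0def, h]
      show V (Pt 0 t0) = V (Pt 0 (b - t0))
      have hτ : τ2 b (Pt 0 t0) = Pt 0 (b - t0) := by
        refine (WithLp.ext_iff _).2 (funext fun i => ?_)
        fin_cases i <;> simp [τ2_apply_0, τ2_apply_1, Pt_0, Pt_1]
      rw [← hτ, hVfun]
      exact (sym_V hKc _).symm
  have hkey : g2 s0 < g1 s0 := by
    show V (Pt 0 s0) < V (Pt s0 0)
    rw [hVfun]
    exact key_lt hKc hKanti hb hab hs00 hs0b
  have hle : g1 s0 ≤ sSup (g1 '' Icc 0 a) :=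
    le_csSup (isCompact_Icc.image hg1).bddAbove
      (mem_image_of_mem _ (mem_Icc.2 ⟨hs00.le, by linarith⟩))
  calc sSup (g2 '' Icc 0 b) = g2 t0 := hsup
    _ = g2 s0 := hg2eq
    _ < g1 s0 := hkey
    _ ≤ sSup (g1 '' Icc 0 a) := hle
end
end

section
/- Let K_l : ℝ → ℝ be an even function that is C¹ and strictly decreasing on (0,∞) (so K_l'(r) < 0 for r > 0 and K_l' is odd). Let r_x, r_y > 0 and M > 0. Then ∫_{−r_y}^{r_y} ∫_{−r_x+M}^{r_x+M} K_l'(u − v) du dv < 0. -/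
open MeasureTheory Set Real

noncomputable section

/-- sign lemma: if `K_l` is even, `C¹`, and strictly decreasing
on `(0,∞)`, then for any `r_x, r_y > 0` and any shift `M > 0`,
`∫_{−r_y}^{r_y} ∫_{−r_x+M}^{r_x+M} K_l'(u − v) du dv < 0`. -/
theorem stmt_8
    (Kl : ℝ → ℝ) (hKeven : ∀ r, Kl (-r) = Kl r)
    (hK1 : ContDiff ℝ 1 Kl) (hKanti : StrictAntiOn Kl (Set.Ioi 0))
    (rx ry M : ℝ) (hrx : 0 < rx) (hry : 0 < ry) (hM : 0 < M) :
    (∫ v in (-ry)..ry, ∫ u in (-rx + M)..(rx + M), deriv Kl (u - v)) < 0 := by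
  have hKcont : Continuous Kl := hK1.continuous
  have hKd : Differentiable ℝ Kl := hK1.differentiable one_ne_zero
  have hK'cont : Continuous (deriv Kl) := hK1.continuous_deriv le_rfl
  -- Kl is strictly decreasing in the absolute value, including at 0
  have hKlt : ∀ x y : ℝ, 0 ≤ x → x < y → Kl y < Kl x := by
    intro x y hx hxy
    rcases eq_or_lt_of_le hx with h0 | hx'
    · subst h0
      have hy : (0:ℝ) < y := hxy
      have h1 : Kl y < Kl (y / 2) :=
        hKanti (by simpa using half_pos hy) (by simpa using hy) (half_lt_self hy)
      have h2 : Kl (y / 2) ≤ Kl 0 := by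
        have ht : Filter.Tendsto Kl (nhdsWithin 0 (Set.Ioi 0)) (nhds (Kl 0)) :=
          (hKcont.tendsto 0).mono_left nhdsWithin_le_nhds
        refine ge_of_tendsto ht ?_
        filter_upwards [Ioo_mem_nhdsGT_of_mem
          (show (0:ℝ) ∈ Ico 0 (y / 2) from ⟨le_rfl, half_pos hy⟩)] with ε hε
        exact (hKanti hε.1 (by simpa using half_pos hy) hε.2).le
      linarith
    · exact hKanti hx' (lt_trans hx' hxy) hxy
  -- inner integral computation
  have inner : ∀ v : ℝ, (∫ u in (-rx + M)..(rx + M), deriv Kl (u - v))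
      = Kl (rx + M - v) - Kl (-rx + M - v) := by
    intro v
    rw [intervalIntegral.integral_comp_sub_right (deriv Kl) v,
      intervalIntegral.integral_deriv_eq_sub (fun x _ => hKd x)
        (hK'cont.intervalIntegrable _ _)]
  have hintKl : ∀ a b : ℝ, IntervalIntegrable Kl volume a b :=
    fun a b => hKcont.intervalIntegrable a b
  -- outer integral: split and change variables
  have houter : (∫ v in (-ry)..ry, ∫ u in (-rx + M)..(rx + M), deriv Kl (u - v))
      = (∫ x in (rx + M - ry)..(rx + M + ry), Kl x)
        - ∫ x in (-rx + M - ry)..(-rx + M + ry), Kl x := by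
    have h1 : (∫ v in (-ry)..ry, ∫ u in (-rx + M)..(rx + M), deriv Kl (u - v))
        = ∫ v in (-ry)..ry, (Kl (rx + M - v) - Kl (-rx + M - v)) := by
      refine intervalIntegral.integral_congr fun v _ => inner v
    have i1 : IntervalIntegrable (fun v => Kl (rx + M - v)) volume (-ry) ry :=
      (Continuous.intervalIntegrable (by fun_prop) _ _)
    have i2 : IntervalIntegrable (fun v => Kl (-rx + M - v)) volume (-ry) ry :=
      (Continuous.intervalIntegrable (by fun_prop) _ _)
    rw [h1, intervalIntegral.integral_sub i1 i2,
      intervalIntegral.integral_comp_sub_left Kl (rx + M),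
      intervalIntegral.integral_comp_sub_left Kl (-rx + M)]
    have e1 : rx + M - ry = rx + M - ry := rfl
    rw [show rx + M - -ry = rx + M + ry by ring, show -rx + M - -ry = -rx + M + ry by ring]
  rw [houter]
  -- evenness of s ↦ ∫_{s-ry}^{s+ry} Kl
  have Geven : ∀ s : ℝ, (∫ x in (-s - ry)..(-s + ry), Kl x)
      = ∫ x in (s - ry)..(s + ry), Kl x := by
    intro s
    have : (∫ x in (s - ry)..(s + ry), Kl x) = ∫ x in (s - ry)..(s + ry), Kl (-x) := by
      refine intervalIntegral.integral_congr fun x _ => (hKeven x).symm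
    rw [this, intervalIntegral.integral_comp_neg Kl,
      show -(s + ry) = -s - ry by ring, show -(s - ry) = -s + ry by ring]
  -- key monotonicity
  have key : ∀ a b : ℝ, 0 ≤ a → a < b →
      (∫ x in (b - ry)..(b + ry), Kl x) < ∫ x in (a - ry)..(a + ry), Kl x := by
    intro a b ha hab
    have hadd1 : (∫ x in (a - ry)..(a + ry), Kl x) + ∫ x in (a + ry)..(b + ry), Kl x
        = ∫ x in (a - ry)..(b + ry), Kl x :=
      intervalIntegral.integral_add_adjacent_intervals (hintKl _ _) (hintKl _ _)
    have hadd2 : (∫ x in (a - ry)..(b - ry), Kl x) + ∫ x in (b - ry)..(b + ry), Kl x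
        = ∫ x in (a - ry)..(b + ry), Kl x :=
      intervalIntegral.integral_add_adjacent_intervals (hintKl _ _) (hintKl _ _)
    have hc1 : (∫ x in (a + ry)..(b + ry), Kl x) = ∫ x in a..b, Kl (x + ry) :=
      (intervalIntegral.integral_comp_add_right Kl ry).symm
    have hc2 : (∫ x in (a - ry)..(b - ry), Kl x) = ∫ x in a..b, Kl (x - ry) :=
      (intervalIntegral.integral_comp_sub_right Kl ry).symm
    have hpos : 0 < ∫ x in a..b, (Kl (x - ry) - Kl (x + ry)) := by
      have i3 : IntervalIntegrable (fun x => Kl (x - ry) - Kl (x + ry)) volume a b :=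
        (Continuous.intervalIntegrable (by fun_prop) _ _)
      refine intervalIntegral.intervalIntegral_pos_of_pos_on i3 (fun x hx => ?_) hab
      have hx0 : 0 < x := lt_of_le_of_lt ha hx.1
      have habs : |x - ry| < x + ry := by
        rw [abs_lt]; constructor <;> linarith
      have h1 : Kl (x + ry) < Kl |x - ry| := hKlt _ _ (abs_nonneg _) habs
      have h2 : Kl |x - ry| = Kl (x - ry) := by
        rcases le_or_gt 0 (x - ry) with h | h
        · rw [abs_of_nonneg h]
        · rw [abs_of_neg h]; exact hKeven _
      rw [h2] at h1; linarith
    have hsub : (∫ x in a..b, (Kl (x - ry) - Kl (x + ry)))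
        = (∫ x in a..b, Kl (x - ry)) - ∫ x in a..b, Kl (x + ry) :=
      intervalIntegral.integral_sub
        (Continuous.intervalIntegrable (by fun_prop) _ _)
        (Continuous.intervalIntegrable (by fun_prop) _ _)
    rw [hsub] at hpos
    linarith [hadd1, hadd2, hc1 ▸ hadd1, hc2 ▸ hadd2]
  -- finish: compare shifts rx + M and |M - rx|
  rcases le_or_gt rx M with h | h
  · -- M - rx ≥ 0
    have := key (-rx + M) (rx + M) (by linarith) (by linarith)
    linarith
  · -- M - rx < 0, use evenness: -rx + M = -(rx - M)
    have heq : (∫ x in (-rx + M - ry)..(-rx + M + ry), Kl x)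
        = ∫ x in (rx - M - ry)..(rx - M + ry), Kl x := by
      have := Geven (rx - M)
      rw [show -(rx - M) - ry = -rx + M - ry by ring,
        show -(rx - M) + ry = -rx + M + ry by ring] at this
      exact this
    have := key (rx - M) (rx + M) (by linarith) (by linarith)
    rw [heq]
    linarith
end
end

section
/- Let Ω = triangle with vertices A = (−L, 0), B = (R, 0) with R > L > 0, and C = (0, h) with h > 0, and suppose |AB| > |BC| ≥ |AC|. Let K be C¹ strictly decreasing on (0,∞) with ∫₀¹ K(r) r dr < ∞, V_Ω(x) = ∫_Ω K(|x−y|) dy, β = ∠ABC, and M the midpoint of BC. Then ∫_{BC} V_Ω(x,y) · (y − x tan β) ds > 0, where the integral is with respect to arc length along side BC. -/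
open MeasureTheory Set Real

noncomputable section

namespace Stmt19

noncomputable def sig (R h : ℝ) (x : E2) : E2 :=
  !₂[((h^2 - R^2) * x 0 + 2*R*h * x 1 + R*(R^2 - h^2)) / (R^2 + h^2),
    (2*R*h * x 0 + (R^2 - h^2) * x 1 - h*(R^2 - h^2)) / (R^2 + h^2)]

def gf (R h : ℝ) (x : E2) : ℝ := -R * x 0 + h * x 1 + (R^2 - h^2)/2

lemma sig_apply0 (R h : ℝ) (x : E2) :
    sig R h x 0 = ((h^2 - R^2) * x 0 + 2*R*h * x 1 + R*(R^2 - h^2)) / (R^2 + h^2) := rfl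

lemma sig_apply1 (R h : ℝ) (x : E2) :
    sig R h x 1 = (2*R*h * x 0 + (R^2 - h^2) * x 1 - h*(R^2 - h^2)) / (R^2 + h^2) := rfl

lemma e2_ext {x y : E2} (h0 : x 0 = y 0) (h1 : x 1 = y 1) : x = y := by
  ext i; fin_cases i <;> assumption

lemma sig_invol {R h : ℝ} (hR : 0 < R) (hh : 0 < h) : Function.Involutive (sig R h) := by
  intro x
  have hd : R^2 + h^2 ≠ 0 := by positivity
  apply e2_ext <;> simp only [sig_apply0, sig_apply1] <;> field_simp <;> ring

lemma sig_dist_sq {R h : ℝ} (hR : 0 < R) (hh : 0 < h) (p y : E2) :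
    dist p (sig R h y) ^ 2 = dist p y ^ 2 + 4 * gf R h p * gf R h y / (R^2 + h^2) := by
  have hd : (0:ℝ) < R^2 + h^2 := by positivity
  rw [EuclideanSpace.dist_eq, EuclideanSpace.dist_eq, Real.sq_sqrt (by positivity),
    Real.sq_sqrt (by positivity)]
  simp only [Fin.sum_univ_two, sig_apply0, sig_apply1, gf, Real.dist_eq, sq_abs]
  field_simp
  ring

noncomputable def slin0 (R h : ℝ) (x : E2) : E2 :=
  !₂[((h^2 - R^2) * x 0 + 2*R*h * x 1) / (R^2 + h^2),
    (2*R*h * x 0 + (R^2 - h^2) * x 1) / (R^2 + h^2)]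

noncomputable def slin (R h : ℝ) : E2 →ₗ[ℝ] E2 where
  toFun := slin0 R h
  map_add' x y := by
    apply e2_ext <;> simp [slin0, PiLp.add_apply, Matrix.cons_val_zero, Matrix.cons_val_one] <;> ring
  map_smul' c x := by
    apply e2_ext <;> simp [slin0, PiLp.smul_apply, smul_eq_mul] <;> ring

lemma slin_invol {R h : ℝ} (hR : 0 < R) (hh : 0 < h) : Function.Involutive (slin R h) := by
  intro x
  have hd : R^2 + h^2 ≠ 0 := by positivity
  apply e2_ext <;> simp only [slin, slin0, LinearMap.coe_mk, AddHom.coe_mk,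
    Matrix.cons_val_zero, Matrix.cons_val_one, Matrix.head_cons] <;> field_simp <;> ring

lemma slin_norm {R h : ℝ} (hR : 0 < R) (hh : 0 < h) (x : E2) : ‖slin R h x‖ = ‖x‖ := by
  have hd : (0:ℝ) < R^2 + h^2 := by positivity
  rw [EuclideanSpace.norm_eq, EuclideanSpace.norm_eq]
  congr 1
  simp only [Fin.sum_univ_two, slin, slin0, LinearMap.coe_mk, AddHom.coe_mk,
    Matrix.cons_val_zero, Matrix.cons_val_one, Matrix.head_cons, Real.norm_eq_abs, sq_abs]
  field_simp
  ring

noncomputable def sigIso (R h : ℝ) (hR : 0 < R) (hh : 0 < h) : E2 ≃ₗᵢ[ℝ] E2 :=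
  ⟨LinearEquiv.ofInvolutive (slin R h) (slin_invol hR hh), slin_norm hR hh⟩

noncomputable def tvec (R h : ℝ) : E2 := !₂[R*(R^2 - h^2)/(R^2 + h^2), -(h*(R^2 - h^2))/(R^2 + h^2)]

lemma sig_eq {R h : ℝ} (hR : 0 < R) (hh : 0 < h) :
    sig R h = fun x => sigIso R h hR hh x + tvec R h := by
  funext x
  apply e2_ext <;>
    simp only [sig_apply0, sig_apply1, sigIso, tvec, LinearIsometryEquiv.coe_mk,
      LinearEquiv.ofInvolutive, LinearEquiv.coe_mk, slin, slin0, LinearMap.coe_mk, AddHom.coe_mk,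
      PiLp.add_apply, Matrix.cons_val_zero, Matrix.cons_val_one, Matrix.head_cons] <;> ring

lemma sig_measurePreserving {R h : ℝ} (hR : 0 < R) (hh : 0 < h) :
    MeasurePreserving (sig R h) volume volume := by
  rw [sig_eq hR hh]
  exact (measurePreserving_add_right volume (tvec R h)).comp
    (sigIso R h hR hh).measurePreserving

lemma sig_continuous {R h : ℝ} (hR : 0 < R) (hh : 0 < h) : Continuous (sig R h) := by
  rw [sig_eq hR hh]
  exact (continuous_add_right _).comp (sigIso R h hR hh).continuous

lemma sig_dist {R h : ℝ} (hR : 0 < R) (hh : 0 < h) (x y : E2) :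
    dist (sig R h x) (sig R h y) = dist x y := by
  rw [sig_eq hR hh]
  simp only [dist_add_right]
  exact (sigIso R h hR hh).dist_map x y

lemma combo_mem {s : Set E2} (hs : Convex ℝ s) {A B C : E2} (hA : A ∈ s) (hB : B ∈ s)
    (hC : C ∈ s) {a b c : ℝ} (ha : 0 ≤ a) (hb : 0 ≤ b) (hc : 0 ≤ c) (hsum : a + b + c = 1) :
    a • A + b • B + c • C ∈ s := by
  have := hs.sum_mem (t := Finset.univ) (w := !₂[a, b, c]) (z := !₂[A, B, C])
    (fun i _ => by fin_cases i <;> simpa) (by simp [Fin.sum_univ_three, hsum])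
    (fun i _ => by fin_cases i <;> simpa)
  simpa [Fin.sum_univ_three] using this

lemma hull_decomp {A B C y : E2} (hy : y ∈ convexHull ℝ {A, B, C}) :
    ∃ a b c : ℝ, 0 ≤ a ∧ 0 ≤ b ∧ 0 ≤ c ∧ a + b + c = 1 ∧ y = a • A + b • B + c • C := by
  rw [convexHull_insert (by exact ⟨B, by simp⟩), convexJoin_singleton_left] at hy
  simp only [Set.mem_iUnion, convexHull_pair] at hy
  obtain ⟨z, hz, hyz⟩ := hy
  obtain ⟨u, v, hu, hv, huv, rfl⟩ := hz
  obtain ⟨t, t', ht, ht', htt', rfl⟩ := hyz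
  exact ⟨t, t' * u, t' * v, ht, by positivity, by positivity, by nlinarith,
    by simp [smul_add, smul_smul, add_assoc]⟩

lemma K_lt {K : ℝ → ℝ} (hcont : Continuous K) (hKanti : StrictAntiOn K (Set.Ioi 0))
    {r r' : ℝ} (h0 : 0 ≤ r) (hrr : r < r') : K r' < K r := by
  rcases h0.eq_or_lt with h | h
  · subst h
    have h1 : K r' < K (r'/2) := hKanti (by simpa using by linarith) (by simpa using hrr) (by linarith)
    have h2 : K (r'/2) ≤ K 0 := by
      have ht : Filter.Tendsto K (nhdsWithin (0:ℝ) (Set.Ioi 0)) (nhds (K 0)) :=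
        (hcont.continuousAt).tendsto.mono_left nhdsWithin_le_nhds
      refine ge_of_tendsto ht ?_
      filter_upwards [Ioo_mem_nhdsGT_of_mem (Set.left_mem_Ico.2 (show (0:ℝ) < r'/2 by linarith))]
        with ε hε
      exact le_of_lt (hKanti hε.1 (by simp; linarith) hε.2)
    linarith
  · exact hKanti h (lt_trans h hrr) hrr

def rect (L ε δ : ℝ) : Set E2 := {x | x 0 ∈ Ioo (-L + ε) (-L + 2*ε) ∧ x 1 ∈ Ioo 0 δ}

lemma rect_volume {L ε δ : ℝ} (hε : 0 < ε) (hδ : 0 < δ) : 0 < volume (rect L ε δ) := by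
  have hQ : rect L ε δ = (MeasurableEquiv.toLp 2 (Fin 2 → ℝ)).symm ⁻¹'
      (Set.pi Set.univ fun i => Ioo (![-L + ε, 0] i) (![-L + 2*ε, δ] i)) := by
    ext x
    simp only [rect, Set.mem_preimage, Set.mem_pi, Set.mem_univ, forall_true_left,
      Fin.forall_fin_two, Set.mem_setOf_eq, Matrix.cons_val_zero, Matrix.cons_val_one,
      Matrix.head_cons]
    rfl
  rw [hQ, (EuclideanSpace.volume_preserving_symm_measurableEquiv_toLp (Fin 2)).measure_preimage
    (MeasurableSet.univ_pi fun i => measurableSet_Ioo).nullMeasurableSet]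
  rw [volume_pi_pi]
  simp only [Fin.prod_univ_two, Matrix.cons_val_zero, Matrix.cons_val_one, Matrix.head_cons,
    Real.volume_Ioo]
  rw [ENNReal.mul_pos_iff]
  constructor <;> rw [ENNReal.ofReal_pos] <;> linarith

section tri

variable {L R h : ℝ} (hL : 0 < L) (hLR : L < R) (hh : 0 < h) (hkey : h^2 < L^2 + 2*L*R)

include hL hLR hh hkey in
lemma reflect_mem {y : E2} (hy : y ∈ convexHull ℝ {(!₂[-L, 0] : E2), !₂[R, 0], !₂[0, h]})
    (hgy : gf R h y ≤ 0) : sig R h y ∈ convexHull ℝ {(!₂[-L, 0] : E2), !₂[R, 0], !₂[0, h]} := by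
  have hd : (0:ℝ) < R^2 + h^2 := by positivity
  have hq : 0 < (2*R*L + R^2 - h^2) / (R^2 + h^2) := by
    apply div_pos _ hd; nlinarith
  set q : ℝ := (2*R*L + R^2 - h^2) / (R^2 + h^2) with hqdef
  obtain ⟨a, b, c, ha, hb, hc, hsum, rfl⟩ := hull_decomp hy
  have h0 : (a • (!₂[-L, 0] : E2) + b • (!₂[R, 0] : E2) + c • (!₂[0, h] : E2)) 0
      = a * (-L) + b * R := by
    simp [PiLp.add_apply, PiLp.smul_apply]
  have h1 : (a • (!₂[-L, 0] : E2) + b • (!₂[R, 0] : E2) + c • (!₂[0, h] : E2)) 1 = c * h := by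
    simp [PiLp.add_apply, PiLp.smul_apply]
  rw [gf, h0, h1] at hgy
  have ha' : a = 1 - b - c := by linarith
  subst ha'
  have hbc : c ≤ b - (1 - b - c) * q := by
    have h2 : (1 - b - c) * ((2*R*L + R^2 - h^2)/(R^2 + h^2)) ≤ b - c := by
      rw [← mul_div_assoc, div_le_iff₀ hd]
      nlinarith [hgy]
    rw [hqdef]; linarith
  have hq0 : 0 ≤ (1 - b - c) * q := by positivity
  have heq : sig R h ((1 - b - c) • (!₂[-L, 0] : E2) + b • (!₂[R, 0] : E2) + c • (!₂[0, h] : E2))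
      = (1 - b - c) • (!₂[-L, 0] : E2) + (c + (1 - b - c) * q) • (!₂[R, 0] : E2)
        + (b - (1 - b - c) * q) • (!₂[0, h] : E2) := by
    apply e2_ext
    · rw [sig_apply0, h0, h1]
      have h0' := h0; have h1' := h1
      rw [show ((1 - b - c) • (!₂[-L, 0] : E2) + (c + (1 - b - c) * q) • (!₂[R, 0] : E2)
        + (b - (1 - b - c) * q) • (!₂[0, h] : E2)) 0
        = (1 - b - c) * (-L) + (c + (1 - b - c) * q) * R by
          simp [PiLp.add_apply, PiLp.smul_apply], hqdef]
      field_simp; ring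
    · rw [sig_apply1, h0, h1]
      rw [show ((1 - b - c) • (!₂[-L, 0] : E2) + (c + (1 - b - c) * q) • (!₂[R, 0] : E2)
        + (b - (1 - b - c) * q) • (!₂[0, h] : E2)) 1
        = (b - (1 - b - c) * q) * h by
          simp [PiLp.add_apply, PiLp.smul_apply], hqdef]
      field_simp; ring
  rw [heq]
  exact combo_mem (convex_convexHull ℝ _) (subset_convexHull ℝ _ (by simp))
    (subset_convexHull ℝ _ (by simp)) (subset_convexHull ℝ _ (by simp))
    ha (by positivity) (le_trans hc hbc) (by ring)

variable {ε δ : ℝ} (hε : 0 < ε) (hε2 : 2*ε ≤ L) (hδ : 0 < δ) (hδh : δ ≤ h/2) (hδε : L*δ ≤ ε*h)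
  (hεR : 8*R*ε ≤ 2*L*R + R^2 - h^2)

include hL hLR hh hε2 hδh hδε in
lemma rect_subset_hull : rect L ε δ ⊆ convexHull ℝ {(!₂[-L, 0] : E2), !₂[R, 0], !₂[0, h]} := by
  intro x ⟨⟨hx01, hx02⟩, hx11, hx12⟩
  have hh0 : h ≠ 0 := ne_of_gt hh
  have hLR0 : L + R ≠ 0 := ne_of_gt (by linarith)
  have hc1 : x 1 / h < 1 := by rw [div_lt_one hh]; linarith
  have hc0 : 0 < x 1 / h := by positivity
  have key : ((R*(1 - x 1/h) - x 0)/(L+R)) • (!₂[-L, 0] : E2)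
      + ((x 0 + L*(1 - x 1/h))/(L+R)) • (!₂[R, 0] : E2) + (x 1/h) • (!₂[0, h] : E2) = x := by
    apply e2_ext <;>
      simp only [PiLp.add_apply, PiLp.smul_apply, Matrix.cons_val_zero, Matrix.cons_val_one,
        Matrix.head_cons, smul_eq_mul] <;> field_simp <;> ring
  rw [← key]
  apply combo_mem (convex_convexHull ℝ _) (subset_convexHull ℝ _ (by simp))
    (subset_convexHull ℝ _ (by simp)) (subset_convexHull ℝ _ (by simp))
  · apply div_nonneg _ (by linarith)
    nlinarith [hc1.le]
  · apply div_nonneg _ (by linarith)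
    have h1 : L * (x 1) ≤ ε * h := le_trans (by nlinarith) hδε
    have h2 : L * (x 1 / h) ≤ ε := by rw [mul_div_assoc', div_le_iff₀ hh]; exact h1
    nlinarith [h2]
  · positivity
  · field_simp; ring

include hLR hh hε hε2 hδh hεR hL in
lemma rect_sig_neg : ∀ x ∈ rect L ε δ,
    2*R*h * x 0 + (R^2 - h^2) * x 1 - h*(R^2 - h^2) < 0 := by
  rintro x ⟨⟨hx01, hx02⟩, hx11, hx12⟩
  have hR : 0 < R := lt_trans hL hLR
  have hx1h : x 1 - h ≤ -h/2 := by linarith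
  have hx00 : x 0 < 0 := by linarith
  rcases le_or_gt (h^2) (R^2) with hcase | hcase
  · have h1 : (R^2 - h^2) * (x 1 - h) ≤ 0 :=
      mul_nonpos_of_nonneg_of_nonpos (by linarith) (by linarith)
    have h2 : 2*R*h*x 0 < 0 := mul_neg_of_pos_of_neg (by positivity) hx00
    nlinarith [h1, h2]
  · have h1 : (R^2 - h^2) * x 1 - h * (R^2 - h^2) ≤ (h^2 - R^2) * h := by
      nlinarith [mul_pos (show (0:ℝ) < h^2 - R^2 by linarith) hx11]
    have h2 : 2*R*h*x 0 < 2*R*h*(-L + 2*ε) :=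
      mul_lt_mul_of_pos_left hx02 (by positivity)
    have h3 : 8*R*ε*h ≤ (2*L*R + R^2 - h^2)*h := mul_le_mul_of_nonneg_right hεR hh.le
    nlinarith [h1, h2, h3, mul_pos (mul_pos hR hh) hε]

include hL hLR hh in
lemma hull_halfplane : convexHull ℝ {(!₂[-L, 0] : E2), !₂[R, 0], !₂[0, h]} ⊆ {x : E2 | 0 ≤ x 1} := by
  apply convexHull_min _ (convex_halfSpace_ge (⟨fun a b => rfl, fun c a => rfl⟩ :
    IsLinearMap ℝ fun x : E2 => x 1) 0)
  rintro x (rfl | rfl | rfl) <;> simp [hh.le]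

include hL hLR hh hkey in
lemma main_pointwise {K : ℝ → ℝ} (hcont : Continuous K)
    (hKanti : StrictAntiOn K (Set.Ioi 0)) {Ω : Set E2}
    (hΩeq : Ω = convexHull ℝ {(!₂[-L, 0] : E2), !₂[R, 0], !₂[0, h]})
    {p : E2} (hgp : gf R h p < 0) :
    ∫ y in Ω, K (dist p y) < ∫ y in Ω, K (dist (sig R h p) y) := by
  have hR : 0 < R := lt_trans hL hLR
  have hΩc : IsCompact Ω := hΩeq ▸ (Set.toFinite _).isCompact_convexHull (𝕜 := ℝ)
  have hΩm : MeasurableSet Ω := hΩc.isClosed.measurableSet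
  have hinv := sig_invol hR hh
  have hcontσ := sig_continuous hR hh
  have mp := sig_measurePreserving hR hh
  have emb : MeasurableEmbedding (sig R h) :=
    (⟨⟨sig R h, sig R h, hinv.leftInverse, hinv.rightInverse⟩, hcontσ, hcontσ⟩ :
      Homeomorph E2 E2).measurableEmbedding
  set W : Set E2 := sig R h ⁻¹' Ω with hWdef
  have hWm : MeasurableSet W := (hΩc.isClosed.preimage hcontσ).measurableSet
  have hWimg : sig R h '' Ω = W := by
    ext z
    constructor
    · rintro ⟨y, hy, rfl⟩; simpa [hWdef, hinv y] using hy
    · intro hz; exact ⟨sig R h z, hz, hinv z⟩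
  have hWc : IsCompact W := hWimg ▸ hΩc.image hcontσ
  have hKpc : Continuous fun y : E2 => K (dist p y) := hcont.comp (continuous_const.dist continuous_id)
  have hKσc : Continuous fun y => K (dist p (sig R h y)) :=
    hcont.comp (continuous_const.dist hcontσ)
  have hintΩ : IntegrableOn (fun y => K (dist p y)) Ω := hKpc.continuousOn.integrableOn_compact hΩc
  have hintW : IntegrableOn (fun y => K (dist p y)) W := hKpc.continuousOn.integrableOn_compact hWc
  have hintσΩ : IntegrableOn (fun y => K (dist p (sig R h y))) Ω :=
    hKσc.continuousOn.integrableOn_compact hΩc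
  -- step 1
  have step1 : ∫ y in Ω, K (dist (sig R h p) y) = ∫ y in Ω, K (dist p (sig R h y)) := by
    refine integral_congr_ae (Filter.Eventually.of_forall fun y => ?_)
    show K (dist (sig R h p) y) = K (dist p (sig R h y))
    rw [show dist (sig R h p) y = dist p (sig R h y) by
      conv_lhs => rw [← hinv y]
      exact sig_dist hR hh p (sig R h y)]
  -- step 2
  have hpreW : sig R h ⁻¹' W = Ω := by
    ext z; simp [hWdef, hinv z]
  have step2 : ∫ y in Ω, K (dist p (sig R h y)) = ∫ z in W, K (dist p z) := by
    have h2 := mp.setIntegral_preimage_emb emb (fun y => K (dist p y)) W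
    rw [hpreW] at h2
    exact h2
  -- step 3 : splitting
  have hsplitW : (∫ z in W ∩ Ω, K (dist p z)) + ∫ z in W \ Ω, K (dist p z)
      = ∫ z in W, K (dist p z) := integral_inter_add_diff hΩm hintW
  have hsplitΩ : (∫ z in Ω ∩ W, K (dist p z)) + ∫ z in Ω \ W, K (dist p z)
      = ∫ z in Ω, K (dist p z) := integral_inter_add_diff hWm hintΩ
  have hcomm : (∫ z in W ∩ Ω, K (dist p z)) = ∫ z in Ω ∩ W, K (dist p z) := by
    rw [Set.inter_comm]
  -- step 4
  have hdiffpre : sig R h ⁻¹' (W \ Ω) = Ω \ W := by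
    rw [Set.preimage_diff, hpreW]
  have step4 : ∫ z in W \ Ω, K (dist p z) = ∫ x in Ω \ W, K (dist p (sig R h x)) := by
    have h4 := mp.setIntegral_preimage_emb emb (fun y => K (dist p y)) (W \ Ω)
    rw [hdiffpre] at h4
    exact h4.symm
  -- step 5
  have hintD1 : IntegrableOn (fun x => K (dist p (sig R h x))) (Ω \ W) :=
    hintσΩ.mono_set Set.diff_subset
  have hintD2 : IntegrableOn (fun y => K (dist p y)) (Ω \ W) := hintΩ.mono_set Set.diff_subset
  have step5 : (∫ x in Ω \ W, K (dist p (sig R h x))) - ∫ x in Ω \ W, K (dist p x)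
      = ∫ x in Ω \ W, (K (dist p (sig R h x)) - K (dist p x)) := (integral_sub hintD1 hintD2).symm
  -- positivity of F on Ω \ W
  have hFpos : ∀ x ∈ Ω \ W, 0 < K (dist p (sig R h x)) - K (dist p x) := by
    rintro x ⟨hxΩ, hxW⟩
    have hgx : 0 < gf R h x := by
      by_contra hle
      refine hxW ?_
      show sig R h x ∈ Ω
      rw [hΩeq]
      exact reflect_mem hL hLR hh hkey (hΩeq ▸ hxΩ) (not_lt.1 hle)
    have hpx : p ≠ x := fun he => by rw [he] at hgp; linarith
    have hdpos : 0 < dist p x := dist_pos.2 hpx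
    have hlt : dist p (sig R h x) < dist p x := by
      have hsq := sig_dist_sq hR hh p x
      have hsqlt : dist p (sig R h x) ^ 2 < dist p x ^ 2 := by
        rw [hsq]
        have hneg : 4 * gf R h p * gf R h x / (R^2 + h^2) < 0 := by
          apply div_neg_of_neg_of_pos _ (by positivity)
          nlinarith [mul_pos (neg_pos.2 hgp) hgx]
        linarith
      exact lt_of_pow_lt_pow_left₀ 2 dist_nonneg hsqlt
    exact sub_pos.2 (K_lt hcont hKanti dist_nonneg hlt)
  -- choose the rectangle
  have hγ : 0 < 2*L*R + R^2 - h^2 := by nlinarith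
  set ε : ℝ := min (L/2) ((2*L*R + R^2 - h^2)/(16*R)) with hεdef
  have hε : 0 < ε := lt_min (by linarith) (by positivity)
  have hε2 : 2*ε ≤ L := by
    have := min_le_left (L/2) ((2*L*R + R^2 - h^2)/(16*R))
    rw [hεdef]; linarith
  have hεR : 8*R*ε ≤ 2*L*R + R^2 - h^2 := by
    have h1 : ε ≤ (2*L*R + R^2 - h^2)/(16*R) := min_le_right _ _
    have h2 : 8*R*ε ≤ 8*R*((2*L*R + R^2 - h^2)/(16*R)) :=
      mul_le_mul_of_nonneg_left h1 (by positivity)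
    have h3 : 8*R*((2*L*R + R^2 - h^2)/(16*R)) = (2*L*R + R^2 - h^2)/2 := by
      field_simp; ring
    rw [h3] at h2; linarith
  set δ : ℝ := min (h/2) (ε*h/L) with hδdef
  have hδ : 0 < δ := lt_min (by linarith) (by positivity)
  have hδh : δ ≤ h/2 := min_le_left _ _
  have hδε : L*δ ≤ ε*h := by
    have h1 : δ ≤ ε*h/L := min_le_right _ _
    have h2 : L*δ ≤ L*(ε*h/L) := mul_le_mul_of_nonneg_left h1 hL.le
    rw [show L*(ε*h/L) = ε*h by field_simp] at h2
    exact h2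
  have hQsub : rect L ε δ ⊆ Ω \ W := by
    intro x hx
    refine ⟨hΩeq ▸ rect_subset_hull hL hLR hh hε2 hδh hδε hx, ?_⟩
    intro hxW
    have h1 := rect_sig_neg hL hLR hh hε hε2 hδh hεR x hx
    have h2 : sig R h x 1 < 0 := by
      rw [sig_apply1]
      exact div_neg_of_neg_of_pos h1 (by positivity)
    have h3 : 0 ≤ sig R h x 1 := hull_halfplane hL hLR hh (hΩeq ▸ (hxW : sig R h x ∈ Ω))
    linarith
  -- strict positivity of the difference integral
  have hintF : IntegrableOn (fun x => K (dist p (sig R h x)) - K (dist p x)) (Ω \ W) :=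
    hintD1.sub hintD2
  have hmeas : MeasurableSet (Ω \ W) := hΩm.diff hWm
  have hpos : 0 < ∫ x in Ω \ W, (K (dist p (sig R h x)) - K (dist p x)) := by
    rw [setIntegral_pos_iff_support_of_nonneg_ae
      ((ae_restrict_iff' hmeas).2 (Filter.Eventually.of_forall fun x hx => (hFpos x hx).le))
      hintF]
    refine lt_of_lt_of_le (rect_volume (L := L) hε hδ) (measure_mono ?_)
    intro x hx
    exact ⟨fun h0 => (ne_of_gt (hFpos x (hQsub hx))) (by simpa using h0), hQsub hx⟩
  rw [step1, step2, ← hsplitW, ← hsplitΩ, hcomm]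
  rw [← step5] at hpos
  rw [← step4] at hpos
  linarith

include hL hLR hh in
lemma V_path_continuous {K : ℝ → ℝ} (hcont : Continuous K) {Ω : Set E2}
    (hΩeq : Ω = convexHull ℝ {(!₂[-L, 0] : E2), !₂[R, 0], !₂[0, h]}) (B C : E2) :
    Continuous fun s : ℝ => ∫ y in Ω, K (dist ((1 - s) • B + s • C) y) := by
  have hΩc : IsCompact Ω := hΩeq ▸ (Set.toFinite _).isCompact_convexHull (𝕜 := ℝ)
  have hΩm : MeasurableSet Ω := hΩc.isClosed.measurableSet
  set γ : ℝ → E2 := fun s => (1 - s) • B + s • C with hγdef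
  have hγc : Continuous γ :=
    ((continuous_const.sub continuous_id).smul continuous_const).add
      (continuous_id.smul continuous_const)
  rw [continuous_iff_continuousAt]
  intro s₀
  obtain ⟨r, hr⟩ : ∃ r, Ω ⊆ Metric.closedBall (γ s₀) r := hΩc.isBounded.subset_closedBall (γ s₀)
  obtain ⟨Cb, hCb⟩ := (isCompact_Icc (a := (0:ℝ)) (b := r + 1)).exists_bound_of_continuousOn
    hcont.continuousOn
  have hev : ∀ᶠ s in nhds s₀, dist (γ s) (γ s₀) < 1 :=
    Metric.tendsto_nhds.mp (hγc.tendsto s₀) 1 one_pos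
  refine continuousAt_of_dominated (bound := fun _ => Cb) ?_ ?_ ?_ ?_
  · exact Filter.Eventually.of_forall fun s =>
      (hcont.comp (continuous_const.dist continuous_id)).aestronglyMeasurable
  · filter_upwards [hev] with s hs
    rw [ae_restrict_iff' hΩm]
    refine Filter.Eventually.of_forall fun y hy => ?_
    have h1 : dist (γ s) y ≤ r + 1 := by
      have := hr hy
      rw [Metric.mem_closedBall] at this
      calc dist (γ s) y ≤ dist (γ s) (γ s₀) + dist (γ s₀) y := dist_triangle _ _ _
        _ ≤ r + 1 := by rw [dist_comm y (γ s₀)] at this; linarith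
    exact hCb _ ⟨dist_nonneg, h1⟩
  · exact integrableOn_const hΩc.measure_lt_top.ne
  · refine Filter.Eventually.of_forall fun y => ?_
    exact (hcont.comp ((hγc.dist continuous_const))).continuousAt

end tri

end Stmt19

set_option maxHeartbeats 2000000 in
open Stmt19 in
/-- the key boundary-integral sign estimate. For the triangle
with vertices `A = (−L,0)`, `B = (R,0)`, `C = (0,h)` with `R > L > 0`, `h > 0`
and `|AB| > |BC| ≥ |AC|`, with `β = ∠ABC`, the arc-length integral of
`V_Ω(x,y)·(y − x tan β)` over the side `BC` is strictly positive. -/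
theorem stmt_19
    (K : ℝ → ℝ) (hK1 : ContDiff ℝ 1 K) (hKanti : StrictAntiOn K (Set.Ioi 0))
    (hKint : IntegrableOn (fun r => K r * r) (Set.Ioc (0:ℝ) 1))
    (L R h : ℝ) (hL : 0 < L) (hLR : L < R) (hh : 0 < h)
    (A B C : E2) (hA : A = ![-L, 0]) (hB : B = ![R, 0]) (hC : C = ![0, h])
    (hside1 : dist A B > dist B C) (hside2 : dist B C ≥ dist A C)
    (Ω : Set E2) (hΩ : Ω = convexHull ℝ {A, B, C})
    (V : E2 → ℝ) (hV : ∀ x, V x = ∫ y in Ω, K (dist x y))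
    (β : ℝ) (hβ : β = EuclideanGeometry.angle A B C) :
    0 < dist B C * ∫ s in (0:ℝ)..1,
        V ((1 - s) • B + s • C) *
          (((1 - s) • B + s • C : E2) 1 - ((1 - s) • B + s • C : E2) 0 * Real.tan β) := by
  replace hA : A = !₂[-L, 0] := by rw [← hA]
  replace hB : B = !₂[R, 0] := by rw [← hB]
  replace hC : C = !₂[0, h] := by rw [← hC]
  have hR : 0 < R := lt_trans hL hLR
  have hcont : Continuous K := hK1.continuous
  have hd : (0:ℝ) < R^2 + h^2 := by positivity
  have hdist_coords : ∀ x y : E2, dist x y = Real.sqrt ((x 0 - y 0)^2 + (x 1 - y 1)^2) := by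
    intro x y
    rw [EuclideanSpace.dist_eq]
    simp [Fin.sum_univ_two, Real.dist_eq, sq_abs]
  -- side computations
  have hAB : dist A B = L + R := by
    rw [hA, hB, hdist_coords]
    rw [show ((!₂[-L, 0] : E2) 0 - (!₂[R, 0] : E2) 0)^2 + ((!₂[-L, 0] : E2) 1 - (!₂[R, 0] : E2) 1)^2
      = (L + R)^2 by
        simp only [Matrix.cons_val_zero, Matrix.cons_val_one, Matrix.head_cons]; ring]
    exact Real.sqrt_sq (by linarith)
  have hBC : dist B C = Real.sqrt (R^2 + h^2) := by
    rw [hB, hC, hdist_coords]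
    congr 1
    simp only [Matrix.cons_val_zero, Matrix.cons_val_one, Matrix.head_cons]
    ring
  have hBCpos : 0 < dist B C := by rw [hBC]; exact Real.sqrt_pos.2 hd
  have hkey : h^2 < L^2 + 2*L*R := by
    have h1 : Real.sqrt (R^2 + h^2) < L + R := by rw [← hAB, ← hBC]; exact hside1
    nlinarith [Real.sq_sqrt hd.le, Real.sqrt_nonneg (R^2 + h^2)]
  -- tan β = h / R
  have hs0 : 0 < Real.sqrt (R^2 + h^2) := Real.sqrt_pos.2 hd
  have hs2 : Real.sqrt (R^2 + h^2) ^ 2 = R^2 + h^2 := Real.sq_sqrt hd.le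
  have hAC : dist A C = Real.sqrt (L^2 + h^2) := by
    rw [hA, hC, hdist_coords]
    congr 1
    simp only [Matrix.cons_val_zero, Matrix.cons_val_one, Matrix.head_cons]
    ring
  have hCB : dist C B = Real.sqrt (R^2 + h^2) := by rw [dist_comm]; exact hBC
  have hβ01 : 0 ≤ β ∧ β ≤ Real.pi := by
    rw [hβ]
    exact ⟨EuclideanGeometry.angle_nonneg _ _ _, EuclideanGeometry.angle_le_pi _ _ _⟩
  have hcos : Real.cos β = R / Real.sqrt (R^2 + h^2) := by
    have hlaw := EuclideanGeometry.law_cos A B C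
    rw [← hβ, hAC, hAB, hCB] at hlaw
    rw [Real.mul_self_sqrt (show (0:ℝ) ≤ L^2 + h^2 by positivity),
      Real.mul_self_sqrt (show (0:ℝ) ≤ R^2 + h^2 by positivity)] at hlaw
    have h2 : 2*(L+R)*(Real.cos β * Real.sqrt (R^2+h^2)) = 2*(L+R)*R := by
      linear_combination hlaw
    have h3 : Real.cos β * Real.sqrt (R^2+h^2) = R :=
      mul_left_cancel₀ (show (2:ℝ)*(L+R) ≠ 0 by positivity) h2
    rw [eq_div_iff (ne_of_gt hs0)]
    exact h3
  have hsin : Real.sin β = h / Real.sqrt (R^2 + h^2) := by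
    rw [Real.sin_eq_sqrt_one_sub_cos_sq hβ01.1 hβ01.2, hcos]
    rw [show 1 - (R / Real.sqrt (R^2+h^2))^2 = (h / Real.sqrt (R^2+h^2))^2 by
      rw [div_pow, div_pow, hs2]; field_simp; ring]
    exact Real.sqrt_sq (by positivity)
  have htan : Real.tan β = h / R := by
    rw [Real.tan_eq_sin_div_cos, hsin, hcos, div_div_div_cancel_right₀]
    exact ne_of_gt hs0
  -- path coordinates
  have hp0 : ∀ s : ℝ, ((1 - s) • B + s • C : E2) 0 = (1 - s) * R := by
    intro s
    rw [hB, hC]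
    simp [PiLp.add_apply, PiLp.smul_apply]
  have hp1 : ∀ s : ℝ, ((1 - s) • B + s • C : E2) 1 = s * h := by
    intro s
    rw [hB, hC]
    simp [PiLp.add_apply, PiLp.smul_apply]
  have harr : ∀ s : ℝ, s * h - (1 - s) * R * (h / R) = h * (2*s - 1) := by
    intro s; field_simp; ring
  simp only [hp0, hp1, htan, harr]
  -- now the integral of g s = V ((1-s)•B+s•C) * (h*(2s-1))
  have hΩ' : Ω = convexHull ℝ {(!₂[-L, 0] : E2), !₂[R, 0], !₂[0, h]} := by
    rw [hΩ, hA, hB, hC]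
  have hVfun : (fun s : ℝ => V ((1 - s) • B + s • C))
      = fun s : ℝ => ∫ y in Ω, K (dist ((1 - s) • B + s • C) y) := funext fun s => hV _
  have hVc : Continuous fun s : ℝ => V ((1 - s) • B + s • C) := by
    rw [hVfun]
    exact V_path_continuous hL hLR hh hcont hΩ' B C
  set g : ℝ → ℝ := fun s => V ((1 - s) • B + s • C) * (h * (2*s - 1)) with hgdef
  have hgc : Continuous g := hVc.mul
    (continuous_const.mul ((continuous_const.mul continuous_id).sub continuous_const))
  have hgrc : Continuous fun s => g (1 - s) := hgc.comp (continuous_const.sub continuous_id)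
  have hsplit : (∫ s in (0:ℝ)..(1/2), g s) + ∫ s in (1/2:ℝ)..1, g s = ∫ s in (0:ℝ)..1, g s :=
    intervalIntegral.integral_add_adjacent_intervals
      (hgc.intervalIntegrable _ _) (hgc.intervalIntegrable _ _)
  have hrefl : (∫ s in (0:ℝ)..(1/2), g (1 - s)) = ∫ s in (1/2:ℝ)..1, g s := by
    have := intervalIntegral.integral_comp_sub_left (a := (0:ℝ)) (b := (1/2:ℝ)) g 1
    rw [this]
    norm_num
  have hcombine : (∫ s in (0:ℝ)..(1/2), (g s + g (1 - s)))
      = (∫ s in (0:ℝ)..(1/2), g s) + ∫ s in (0:ℝ)..(1/2), g (1 - s) :=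
    intervalIntegral.integral_add (hgc.intervalIntegrable _ _) (hgrc.intervalIntegrable _ _)
  have hpoint : ∀ s ∈ Set.Ioo (0:ℝ) (1/2), 0 < g s + g (1 - s) := by
    rintro s ⟨hs0', hs1'⟩
    have hgp : gf R h ((1 - s) • B + s • C) < 0 := by
      rw [gf, hp0 s, hp1 s]
      nlinarith
    have hsig : sig R h ((1 - s) • B + s • C) = (1 - (1 - s)) • B + (1 - s) • C := by
      apply e2_ext
      · rw [sig_apply0, hp0 s, hp1 s, hp0 (1 - s)]
        field_simp; ring
      · rw [sig_apply1, hp0 s, hp1 s, hp1 (1 - s)]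
        field_simp; ring
    have hVlt : V ((1 - s) • B + s • C) < V ((1 - (1 - s)) • B + (1 - s) • C) := by
      rw [hV, hV, ← hsig]
      exact main_pointwise hL hLR hh hkey hcont hKanti hΩ' hgp
    have h1 : g s + g (1 - s)
        = h * (1 - 2*s) * (V ((1 - (1 - s)) • B + (1 - s) • C) - V ((1 - s) • B + s • C)) := by
      simp only [hgdef]
      ring
    rw [h1]
    have hfac : (0:ℝ) < h * (1 - 2*s) := by nlinarith
    exact mul_pos hfac (by linarith)
  have hpos : 0 < ∫ s in (0:ℝ)..(1/2), (g s + g (1 - s)) :=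
    intervalIntegral.intervalIntegral_pos_of_pos_on
      ((hgc.add hgrc).intervalIntegrable _ _) hpoint (by norm_num)
  apply mul_pos hBCpos
  have : (0:ℝ) < (∫ s in (0:ℝ)..(1/2), g s) + ∫ s in (0:ℝ)..(1/2), g (1 - s) := by
    rw [← hcombine]; exact hpos
  rw [← hsplit, ← hrefl]
  exact this
end
end
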